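/- arXiv:2103.11892 — 6 statements merged into one kernel-verified Lean document; each statement's English description precedes it below -/
import Mathlib

section
/- Let n ≥ k ≥ 3, 2 ≤ s ≤ C(k,2) and r ≥ 2 be integers, and let 1 ≤ s' < s. If c_{r,P_{k,s}}(n) = |C_{r,P_{k,s}}(T_{k-1}(n))|, then c_{r,P_{k,s'}}(n) = |C_{r,P_{k,s'}}(T_{k-1}(n))|. -/
open SimpleGraph Finset

namespace ERExt

/-- The edges of `G` with both endpoints in `t`. -/
def cliqueEdges {V : Type*} (G : SimpleGraph V) (t : Finset V) : Set (Sym2 V) :=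
  {e | e ∈ G.edgeSet ∧ ∀ v ∈ e, v ∈ t}

/-- An `r`-coloring of the edges of `G` is `P_{k,s}`-free if fewer than `s` distinct colors
appear on the edges of every copy of `K_k` in `G`. -/
def PkFree {V : Type*} (G : SimpleGraph V) (r k s : ℕ) (c : G.edgeSet → Fin r) : Prop :=
  ∀ t : Finset V, G.IsNClique k t →
    Set.ncard {col : Fin r | ∃ e : G.edgeSet, (∀ v ∈ (e : Sym2 V), v ∈ t) ∧ c e = col} < s

/-- The number of `P_{k,s}`-free `r`-colorings of `G`, i.e. `|C_{r,P_{k,s}}(G)|`. -/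
noncomputable def numPkFree {V : Type*} (G : SimpleGraph V) (r k s : ℕ) : ℕ :=
  Nat.card {c : G.edgeSet → Fin r // PkFree G r k s c}

/-- `c_{r,P_{k,s}}(n)`, the maximum of `|C_{r,P_{k,s}}(G)|` over `n`-vertex graphs `G`. -/
noncomputable def maxPkFree (n r k s : ℕ) : ℕ :=
  sSup {N | ∃ G : SimpleGraph (Fin n), numPkFree G r k s = N}

/-- The Turán number `ex(n, K_k)`. -/
noncomputable def turanNum (n k : ℕ) : ℕ :=
  sSup {N | ∃ G : SimpleGraph (Fin n), G.CliqueFree k ∧ G.edgeSet.ncard = N}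

/-- `A(k,j) = C(k,2) - ex(k, K_{j+1})`. -/
noncomputable def Afun (k j : ℕ) : ℕ := k.choose 2 - turanNum k (j + 1)

/-- `s_0(k) = A(k,2) + 2`. -/
noncomputable def s0 (k : ℕ) : ℕ := Afun k 2 + 2

/-- `s_1(k) = C(k,2) - ⌊k/2⌋ + 2`. -/
def s1 (k : ℕ) : ℕ := k.choose 2 - k / 2 + 2

/-- `i*`, the least `i` with `A(k,k-i) ≥ s-2`. -/
noncomputable def iStar (k s : ℕ) : ℕ := sInf {i | s - 2 ≤ Afun k (k - i)}

/-- The quantity of which `r_0(k,s)` is the least integer strictly above, for `s ≤ s_0(k)`. -/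
noncomputable def r0low (k s : ℕ) : ℝ :=
  ((s : ℝ) - 1) ^ (((k : ℝ) - 1) / ((k : ℝ) - 2)) *
    ∏ i ∈ Finset.Icc 2 (iStar k s),
      ((s : ℝ) - (Afun k (k - i + 1) : ℝ) - 1) ^
        ((1 : ℝ) / (((k : ℝ) - (i : ℝ) - 1) * ((k : ℝ) - (i : ℝ))))

/-- `b(k,p,j) = min{ j·C(p,2), ⌊k/p⌋·C(p,2) + C(k - ⌊k/p⌋·p, 2) }`. -/
def bfun (k p j : ℕ) : ℕ :=
  min (j * p.choose 2) ((k / p) * p.choose 2 + (k - (k / p) * p).choose 2)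

/-- `L(k,s,p,j) = 1 + 2p(k-1)/(j(p-1))`. -/
noncomputable def Lfun (k s p j : ℕ) : ℝ :=
  1 + (2 * (p : ℝ) * ((k : ℝ) - 1)) / ((j : ℝ) * ((p : ℝ) - 1))

/-- `p*`, the largest `2 ≤ p ≤ k-1` with `b(k,p,k-1) ≤ C(k,2) - s + 2`. -/
noncomputable def pStar (k s : ℕ) : ℕ :=
  sSup {p | 2 ≤ p ∧ p ≤ k - 1 ∧ bfun k p (k - 1) ≤ k.choose 2 - s + 2}

/-- `j*`, the largest `1 ≤ j ≤ k-1` with `b(k,2,j) ≤ C(k,2) - s + 2`. -/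
noncomputable def jStar (k s : ℕ) : ℕ :=
  sSup {j | 1 ≤ j ∧ j ≤ k - 1 ∧ bfun k 2 j ≤ k.choose 2 - s + 2}

/-- The product `∏_{i=2}^{k-2} (s - A(k,k-i+1) - 1)^{1/((k-i-1)(k-i))}`. -/
noncomputable def prodMid (k s : ℕ) : ℝ :=
  ∏ i ∈ Finset.Icc 2 (k - 2),
    ((s : ℝ) - (Afun k (k - i + 1) : ℝ) - 1) ^
      ((1 : ℝ) / (((k : ℝ) - (i : ℝ) - 1) * ((k : ℝ) - (i : ℝ))))

/-- The quantity of which `r_0(k,s)` is the least integer strictly above, for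
`s_0(k) < s ≤ s_1(k)`. -/
noncomputable def r0mid (k s : ℕ) : ℝ :=
  ((s : ℝ) - (Afun k 2 : ℝ) - 1) ^ (Lfun k s (pStar k s) (k - 1)) * prodMid k s *
    ((s : ℝ) - 1) ^ (((k : ℝ) - 1) / ((k : ℝ) - 2))

/-- The quantity of which `r_0(k,s)` is the least integer strictly above, for `s > s_1(k)`. -/
noncomputable def r0high (k s : ℕ) : ℝ :=
  ((s : ℝ) - (Afun k 2 : ℝ) - 1) ^ (Lfun k s 2 (jStar k s)) * prodMid k s *
    ((s : ℝ) - 1) ^ (((k : ℝ) - 1) / ((k : ℝ) - 2))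

/-- The threshold `r_0(k,s)`: the least integer greater than the relevant quantity. -/
noncomputable def r0 (k s : ℕ) : ℕ :=
  if s ≤ s0 k then Nat.floor (r0low k s) + 1
  else if s ≤ s1 k then Nat.floor (r0mid k s) + 1
  else Nat.floor (r0high k s) + 1

/-- `r_1(k,s) = ⌈(s-1)^{(k-1)/(k-2)} - 1⌉`. -/
noncomputable def r1fun (k s : ℕ) : ℕ :=
  (⌈((s : ℝ) - 1) ^ (((k : ℝ) - 1) / ((k : ℝ) - 2)) - 1⌉).toNat

/-- `L_opt(k,s)`, the minimum of `L(k,s,p,j)` over admissible pairs `(p,j)`. -/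
noncomputable def Lopt (k s : ℕ) : ℝ :=
  sInf {x | ∃ p j : ℕ, 2 ≤ p ∧ p ≤ k - 1 ∧ 1 ≤ j ∧ j ≤ k - 1 ∧
    bfun k p j ≤ k.choose 2 - s + 2 ∧ x = Lfun k s p j}

/-- A graph is complete multipartite if vertices are adjacent exactly when they lie in
different classes of some partition. -/
def IsCompleteMultipartite' {n : ℕ} (G : SimpleGraph (Fin n)) : Prop :=
  ∃ f : Fin n → Fin n, ∀ v w, G.Adj v w ↔ f v ≠ f w

/-- A list-colored graph is `(K_k, ≥ s)`-free if no copy of `K_k` admits a choice of colors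
from the lists of its edges in which at least `s` distinct colors appear. -/
def GeSFree {V : Type*} (r k s : ℕ) (H : SimpleGraph V) (L : Sym2 V → Finset (Fin r)) : Prop :=
  ¬ ∃ (t : Finset V) (c : Sym2 V → Fin r), H.IsNClique k t ∧
      (∀ e ∈ cliqueEdges H t, c e ∈ L e) ∧
      s ≤ Set.ncard {col : Fin r | ∃ e ∈ cliqueEdges H t, c e = col}

/-- `e_j(H)`, the number of edges of `H` whose list has size `j`. -/
noncomputable def ej {V : Type*} {r : ℕ} (H : SimpleGraph V) (L : Sym2 V → Finset (Fin r))
    (j : ℕ) : ℕ :=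
  Set.ncard {e | e ∈ H.edgeSet ∧ (L e).card = j}

end ERExt

namespace ERExt

lemma pkFree_of_cliqueFree {n : ℕ} {G : SimpleGraph (Fin n)} {r k s : ℕ}
    (hG : G.CliqueFree k) (hs : 1 ≤ s) (c : G.edgeSet → Fin r) : PkFree G r k s c := by
  intro t ht
  exact absurd ht (hG t)

lemma numPkFree_of_cliqueFree {n : ℕ} {G : SimpleGraph (Fin n)} {r k s : ℕ}
    (hG : G.CliqueFree k) (hs : 1 ≤ s) :
    numPkFree G r k s = Nat.card (G.edgeSet → Fin r) := by
  unfold numPkFree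
  exact Nat.card_congr (Equiv.subtypeUnivEquiv (fun c => pkFree_of_cliqueFree hG hs c))

lemma numPkFree_mono {n : ℕ} {G : SimpleGraph (Fin n)} {r k s s' : ℕ} (hss : s' ≤ s) :
    numPkFree G r k s' ≤ numPkFree G r k s := by
  unfold numPkFree
  exact Nat.card_le_card_of_injective
    (fun c => ⟨c.1, fun t ht => lt_of_lt_of_le (c.2 t ht) hss⟩)
    (fun a b hab => by cases a; cases b; simpa [Subtype.ext_iff] using hab)

lemma numPkFree_bdd {n r k s : ℕ} (hr : 1 ≤ r) :
    BddAbove {N | ∃ G : SimpleGraph (Fin n), numPkFree G r k s = N} := by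
  refine ⟨r ^ Nat.card (Sym2 (Fin n)), fun N ⟨G, hG⟩ => ?_⟩
  subst hG
  unfold numPkFree
  calc Nat.card {c : G.edgeSet → Fin r // PkFree G r k s c}
      ≤ Nat.card (G.edgeSet → Fin r) :=
        Nat.card_le_card_of_injective Subtype.val Subtype.val_injective
    _ = r ^ Nat.card G.edgeSet := by simp [Nat.card_fun]
    _ ≤ r ^ Nat.card (Sym2 (Fin n)) := by
        exact Nat.pow_le_pow_right hr
          (Nat.card_le_card_of_injective Subtype.val Subtype.val_injective)

theorem lemma_simple_b' (n k s s' r : ℕ) (hnk : k ≤ n) (hk : 3 ≤ k) (hs2 : 2 ≤ s)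
    (hsk : s ≤ k.choose 2) (hr2 : 2 ≤ r) (hs'1 : 1 ≤ s') (hs's : s' < s)
    (h : maxPkFree n r k s = numPkFree (turanGraph n (k - 1)) r k s) :
    maxPkFree n r k s' = numPkFree (turanGraph n (k - 1)) r k s' := by
  have hcf : (turanGraph n (k - 1)).CliqueFree k := by
    have := SimpleGraph.turanGraph_cliqueFree (n := n) (r := k - 1) (by omega)
    rwa [show k - 1 + 1 = k by omega] at this
  have hts : numPkFree (turanGraph n (k - 1)) r k s = Nat.card ((turanGraph n (k-1)).edgeSet → Fin r) :=
    numPkFree_of_cliqueFree hcf (by omega)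
  have hts' : numPkFree (turanGraph n (k - 1)) r k s' = Nat.card ((turanGraph n (k-1)).edgeSet → Fin r) :=
    numPkFree_of_cliqueFree hcf hs'1
  apply le_antisymm
  · have hne : {N | ∃ G : SimpleGraph (Fin n), numPkFree G r k s' = N}.Nonempty :=
      ⟨_, turanGraph n (k-1), rfl⟩
    apply csSup_le hne
    rintro N ⟨G, rfl⟩
    calc numPkFree G r k s' ≤ numPkFree G r k s := numPkFree_mono (le_of_lt hs's)
      _ ≤ maxPkFree n r k s := le_csSup (numPkFree_bdd (by omega)) ⟨G, rfl⟩
      _ = numPkFree (turanGraph n (k-1)) r k s' := by rw [h, hts, hts']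
  · exact le_csSup (numPkFree_bdd (by omega)) ⟨_, rfl⟩

end ERExt

namespace ERExt

/-- **Lemma 1.1(b).** If the Turán graph is optimal for `s`, it is optimal for any `s' < s`. -/
theorem lemma_simple_b (n k s s' r : ℕ) (hnk : k ≤ n) (hk : 3 ≤ k) (hs2 : 2 ≤ s)
    (hsk : s ≤ k.choose 2) (hr2 : 2 ≤ r) (hs'1 : 1 ≤ s') (hs's : s' < s)
    (h : maxPkFree n r k s = numPkFree (turanGraph n (k - 1)) r k s) :
    maxPkFree n r k s' = numPkFree (turanGraph n (k - 1)) r k s' :=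
  lemma_simple_b' n k s s' r hnk hk hs2 hsk hr2 hs'1 hs's h

end ERExt
end

section
/- Let k ≥ 3 and let G = (V,E) be a (k-1)-partite graph on m vertices with (k-1)-partition V = V_1 ∪ ⋯ ∪ V_{k-1}. If, for some t ≥ (k-1)², the graph G has at least ex(m,K_k) - t edges, then for each i ∈ [k-1] one has | |V_i| - m/(k-1) | < √(2t). -/
open SimpleGraph Finset

namespace ERExt

def mpGraph {m r : ℕ} (p : Fin m → Fin r) : SimpleGraph (Fin m) where
  Adj v w := p v ≠ p w
  symm := ⟨fun _ _ h => Ne.symm h⟩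
  loopless := ⟨fun _ h => h rfl⟩

instance {m r : ℕ} (p : Fin m → Fin r) : DecidableRel (mpGraph p).Adj := by
  dsimp only [mpGraph]; infer_instance


lemma mp_count {m r : ℕ} (p : Fin m → Fin r) :
    2 * (mpGraph p).edgeFinset.card + ∑ i, ((univ.filter fun v => p v = i).card)^2 = m^2 := by
  have hdeg : ∀ v, (mpGraph p).degree v + (univ.filter fun w => p w = p v).card = m := by
    intro v
    rw [← SimpleGraph.card_neighborFinset_eq_degree, neighborFinset_eq_filter]
    have h : ∀ w ∈ (univ : Finset (Fin m)), (mpGraph p).Adj v w ↔ ¬ (p w = p v) := by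
      intro w _; exact ⟨fun h hh => h hh.symm, fun h hh => h hh.symm⟩
    rw [filter_congr h, add_comm]
    have := Finset.card_filter_add_card_filter_not (s := (univ : Finset (Fin m)))
      (fun w => p w = p v)
    simpa using this
  have hsum := SimpleGraph.sum_degrees_eq_twice_card_edges (mpGraph p)
  have hfib : ∑ v : Fin m, (univ.filter fun w => p w = p v).card
      = ∑ i, ((univ.filter fun v => p v = i).card)^2 := by
    rw [← Finset.sum_fiberwise' univ p (fun i => (univ.filter fun v => p v = i).card)]
    congr 1; ext i
    rw [Finset.sum_const, smul_eq_mul, sq]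
  have hh : ∑ v : Fin m, ((mpGraph p).degree v + (univ.filter fun w => p w = p v).card) = m^2 := by
    simp only [hdeg, Finset.sum_const, Finset.card_univ, Fintype.card_fin, smul_eq_mul, sq]
  rw [Finset.sum_add_distrib, hsum, hfib] at hh
  linarith

lemma fiber_sum {m r : ℕ} (p : Fin m → Fin r) :
    ∑ i, (univ.filter fun v => p v = i).card = m := by
  rw [← Finset.card_eq_sum_card_fiberwise (fun v _ => Finset.mem_univ (p v))]
  simp

def pT (m r : ℕ) (hr : 0 < r) : Fin m → Fin r := fun v => ⟨(v : ℕ) % r, Nat.mod_lt _ hr⟩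

lemma turan_eq_mp (m r : ℕ) (hr : 0 < r) : turanGraph m r = mpGraph (pT m r hr) := by
  ext v w
  simp [turanGraph, mpGraph, pT, Fin.ext_iff]

lemma fiber_le (m r : ℕ) (hr : 0 < r) (i : Fin r) :
    (univ.filter fun v => pT m r hr v = i).card ≤ m / r + 1 := by
  classical
  rw [← Finset.card_range (m / r + 1)]
  refine Finset.card_le_card_of_injOn (fun v => (v : ℕ) / r) ?_ ?_
  · intro v hv
    simp only [Finset.mem_coe, Finset.mem_range]
    have : (v : ℕ) / r ≤ m / r := Nat.div_le_div_right (le_of_lt v.2)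
    omega
  · intro v hv w hw hvw
    simp only [Finset.mem_coe, Finset.mem_filter, pT, Fin.ext_iff] at hv hw
    have h1 : (v : ℕ) % r = (w : ℕ) % r := by rw [hv.2, hw.2]
    have hvw' : (v : ℕ) / r = (w : ℕ) / r := hvw
    have hd1 := Nat.div_add_mod (v : ℕ) r
    have hd2 := Nat.div_add_mod (w : ℕ) r
    exact Fin.ext (by rw [← hd1, ← hd2, hvw', h1])

lemma fiber_ge (m r : ℕ) (hr : 0 < r) (i : Fin r) :
    m / r ≤ (univ.filter fun v => pT m r hr v = i).card := by
  classical
  have hlt : ∀ j ∈ Finset.range (m / r), (i : ℕ) + j * r < m := by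
    intro j hj
    rw [Finset.mem_range] at hj
    have h1 : (j + 1) * r ≤ (m / r) * r := Nat.mul_le_mul_right r hj
    have h2 : (m / r) * r ≤ m := Nat.div_mul_le_self m r
    have h3 : (i : ℕ) < r := i.2
    nlinarith [h1, h2, h3]
  rcases Nat.eq_zero_or_pos m with hm | hm
  · simp [hm, Nat.zero_div]
  rw [← Finset.card_range (m / r)]
  refine Finset.card_le_card_of_injOn (fun j => (⟨((i : ℕ) + j * r) % m, Nat.mod_lt _ hm⟩ : Fin m)) ?_ ?_
  · intro j hj
    have hlt' := hlt j hj
    simp only [Finset.mem_coe, Finset.mem_filter, Finset.mem_univ, true_and, pT, Fin.ext_iff]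
    rw [Nat.mod_eq_of_lt hlt']
    simp [Nat.add_mul_mod_self_right, Nat.mod_eq_of_lt i.2]
  · intro a ha b hb hab
    simp only [Finset.mem_coe, Finset.mem_range] at ha hb
    have : ((i : ℕ) + a * r) = ((i : ℕ) + b * r) := by
      have h1 := Nat.mod_eq_of_lt (hlt a (Finset.mem_range.2 ha))
      have h2 := Nat.mod_eq_of_lt (hlt b (Finset.mem_range.2 hb))
      have h3 : ((i : ℕ) + a * r) % m = ((i : ℕ) + b * r) % m := by
        simpa [Fin.ext_iff] using hab
      omega
    exact Nat.eq_of_mul_eq_mul_right hr (by omega)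


lemma dev_sum {r : ℕ} (f : Fin r → ℝ) (μ : ℝ) :
    ∑ i, (f i - μ)^2 = ∑ i, (f i)^2 - 2*μ*(∑ i, f i) + r*μ^2 := by
  have h : ∀ i ∈ (univ : Finset (Fin r)), (f i - μ)^2 = ((f i)^2 + μ^2) - 2*μ*f i :=
    fun i _ => by ring
  rw [Finset.sum_congr rfl h, Finset.sum_sub_distrib, Finset.sum_add_distrib, ← Finset.mul_sum,
    Finset.sum_const, Finset.card_univ, Fintype.card_fin, nsmul_eq_mul]
  ring


set_option maxHeartbeats 1000000 in
/-- **Proposition 2.7.** Class sizes of a `(k-1)`-partite graph with many edges are balanced. -/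
theorem prop_balanced_classes (k m : ℕ) (hk : 3 ≤ k) (G : SimpleGraph (Fin m))
    (part : Fin m → Fin (k - 1)) (hpart : ∀ v w, G.Adj v w → part v ≠ part w)
    (t : ℝ) (ht : ((k : ℝ) - 1) ^ 2 ≤ t)
    (hedges : (turanNum m k : ℝ) - t ≤ (G.edgeSet.ncard : ℝ)) :
    ∀ i : Fin (k - 1),
      |({v : Fin m | part v = i}.ncard : ℝ) - (m : ℝ) / ((k : ℝ) - 1)| < Real.sqrt (2 * t) := by
  intro i0
  classical
  have hrpos : 0 < k - 1 := by omega
  have hkr : (k : ℝ) - 1 = ((k - 1 : ℕ) : ℝ) := by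
    rw [Nat.cast_sub (by omega), Nat.cast_one]
  set N : Fin (k - 1) → ℕ := fun i => (univ.filter fun v => part v = i).card with hN
  set B : Fin (k - 1) → ℕ := fun i => (univ.filter fun v => pT m (k - 1) hrpos v = i).card with hB
  -- nat inequality 1
  have h1 : 2 * G.edgeSet.ncard + ∑ i, (N i)^2 ≤ m^2 := by
    have hle : G.edgeSet.ncard ≤ (mpGraph part).edgeFinset.card := by
      rw [← Set.ncard_coe_finset, coe_edgeFinset]
      refine Set.ncard_le_ncard (SimpleGraph.edgeSet_mono ?_) (Set.toFinite _)
      intro v w h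
      exact hpart v w h
    have hmc : 2 * (mpGraph part).edgeFinset.card + ∑ i, (N i)^2 = m^2 := mp_count part
    omega
  -- nat inequality 2
  have hTle : (mpGraph (pT m (k - 1) hrpos)).edgeFinset.card ≤ turanNum m k := by
    apply le_csSup
    · refine ⟨Nat.card (Sym2 (Fin m)), ?_⟩
      rintro n ⟨G', _, rfl⟩
      calc G'.edgeSet.ncard ≤ (Set.univ : Set (Sym2 (Fin m))).ncard :=
            Set.ncard_le_ncard (Set.subset_univ _) Set.finite_univ
        _ = _ := Set.ncard_univ _
    · refine ⟨mpGraph (pT m (k - 1) hrpos), ?_, ?_⟩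
      · rw [← turan_eq_mp m (k - 1) hrpos, show k = (k - 1) + 1 by omega]
        exact turanGraph_cliqueFree hrpos
      · rw [← coe_edgeFinset, Set.ncard_coe_finset]
  have h2 : m^2 ≤ 2 * turanNum m k + ∑ i, (B i)^2 := by
    have hmc : 2 * (mpGraph (pT m (k - 1) hrpos)).edgeFinset.card + ∑ i, (B i)^2 = m^2 :=
      mp_count (pT m (k - 1) hrpos)
    omega
  have hNsum : ∑ i, N i = m := fiber_sum part
  have hBsum : ∑ i, B i = m := fiber_sum (pT m (k - 1) hrpos)
  have hBbound : ∀ i, m / (k - 1) ≤ B i ∧ B i ≤ m / (k - 1) + 1 :=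
    fun i => ⟨fiber_ge m (k - 1) hrpos i, fiber_le m (k - 1) hrpos i⟩
  -- real part
  set μ : ℝ := (m : ℝ) / ((k - 1 : ℕ) : ℝ) with hμ
  have hrR : (0:ℝ) < ((k - 1 : ℕ):ℝ) := by exact_mod_cast hrpos
  have hr2R : (2:ℝ) ≤ ((k - 1 : ℕ):ℝ) := by exact_mod_cast (by omega : 2 ≤ k - 1)
  have hqμ1 : ((m / (k - 1) : ℕ) : ℝ) ≤ μ := by
    rw [hμ, le_div_iff₀ hrR]
    exact_mod_cast Nat.div_mul_le_self m (k - 1)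
  have hqμ2 : μ ≤ ((m / (k - 1) : ℕ) : ℝ) + 1 := by
    rw [hμ, div_le_iff₀ hrR]
    have hd := Nat.div_add_mod m (k - 1)
    have hm := Nat.mod_lt m hrpos
    have hstep : m ≤ (k - 1) * (m / (k - 1)) + (k - 1) := by omega
    calc (m:ℝ) ≤ ((k - 1 : ℕ):ℝ) * ((m / (k - 1) : ℕ):ℝ) + ((k - 1:ℕ):ℝ) := by exact_mod_cast hstep
      _ = (((m / (k - 1) : ℕ):ℝ) + 1) * ((k - 1:ℕ):ℝ) := by ring
  have hsumNμ : ∑ i, ((N i : ℝ)) = (m : ℝ) := by exact_mod_cast hNsum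
  have hsumBμ : ∑ i, ((B i : ℝ)) = (m : ℝ) := by exact_mod_cast hBsum
  have hrμ : ((k - 1:ℕ) : ℝ) * μ = m := by
    rw [hμ, mul_comm, div_mul_cancel₀ _ (ne_of_gt hrR)]
  have hSN : ∑ i, ((N i : ℝ) - μ)^2 = ∑ i, ((N i:ℝ))^2 - 2*μ*m + (k - 1:ℕ)*μ^2 := by
    rw [dev_sum, hsumNμ]
  have hSB : ∑ i, ((B i : ℝ) - μ)^2 = ∑ i, ((B i:ℝ))^2 - 2*μ*m + (k - 1:ℕ)*μ^2 := by
    rw [dev_sum, hsumBμ]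
  have hSBle : ∑ i, ((B i : ℝ) - μ)^2 ≤ ((k - 1:ℕ) : ℝ) := by
    calc ∑ i, ((B i : ℝ) - μ)^2 ≤ ∑ _i : Fin (k - 1), (1:ℝ) := by
          apply Finset.sum_le_sum
          intro i _
          have h1 := hBbound i
          have hb1 : ((m / (k - 1) : ℕ):ℝ) ≤ (B i : ℝ) := by exact_mod_cast h1.1
          have hb2 : (B i : ℝ) ≤ ((m / (k - 1) : ℕ):ℝ) + 1 := by exact_mod_cast h1.2
          nlinarith
      _ = ((k - 1:ℕ) : ℝ) := by simp
  -- combine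
  have h1R : 2 * (G.edgeSet.ncard : ℝ) + ∑ i, ((N i:ℝ))^2 ≤ (m:ℝ)^2 := by exact_mod_cast h1
  have h2R : (m:ℝ)^2 ≤ 2 * (turanNum m k : ℝ) + ∑ i, ((B i:ℝ))^2 := by exact_mod_cast h2
  have hkey : ∑ i, ((N i : ℝ) - μ)^2 ≤ ((k - 1:ℕ):ℝ) + 2*t := by
    rw [hSN]
    have hx : ∑ i, ((N i:ℝ))^2 ≤ ∑ i, ((B i:ℝ))^2 + 2*t := by linarith
    linarith [hSB ▸ hSBle]
  -- Cauchy-Schwarz on the other classes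
  set d : ℝ := (N i0 : ℝ) - μ with hd
  have hCS := sq_sum_le_card_mul_sum_sq (s := (univ : Finset (Fin (k - 1))).erase i0)
    (f := fun j => (N j : ℝ) - μ)
  have hcard : (((univ : Finset (Fin (k - 1))).erase i0).card : ℝ) = ((k - 1:ℕ) : ℝ) - 1 := by
    rw [Finset.card_erase_of_mem (mem_univ i0), Finset.card_univ, Fintype.card_fin,
      Nat.cast_sub (by omega)]
    simp
  have hsum0 : ∑ j, ((N j : ℝ) - μ) = 0 := by
    rw [Finset.sum_sub_distrib, hsumNμ, Finset.sum_const, Finset.card_univ, Fintype.card_fin,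
      nsmul_eq_mul, hrμ]
    ring
  have herase1 : ∑ j ∈ (univ : Finset (Fin (k - 1))).erase i0, ((N j : ℝ) - μ) = -d := by
    have h := Finset.sum_erase_add (univ : Finset (Fin (k - 1))) (fun j => (N j : ℝ) - μ)
      (mem_univ i0)
    rw [hsum0] at h
    linarith [h]
  have herase2 : ∑ j ∈ (univ : Finset (Fin (k - 1))).erase i0, ((N j : ℝ) - μ)^2
      = ∑ j, ((N j : ℝ) - μ)^2 - d^2 := by
    have h := Finset.sum_erase_add (univ : Finset (Fin (k - 1))) (fun j => ((N j : ℝ) - μ)^2)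
      (mem_univ i0)
    rw [← hd] at h
    linarith [h]
  rw [herase1, herase2, hcard] at hCS
  have ht' : ((k - 1:ℕ):ℝ)^2 ≤ t := by rw [← hkr]; exact ht
  have hd2 : d^2 < 2 * t := by
    have hfac : (((k - 1:ℕ):ℝ) - 1) * (∑ j, ((N j : ℝ) - μ)^2 - d^2)
        ≤ (((k - 1:ℕ):ℝ) - 1) * (((k - 1:ℕ):ℝ) + 2*t - d^2) := by
      apply mul_le_mul_of_nonneg_left (by linarith) (by linarith)
    have hneg : (-d)^2 = d^2 := by ring
    rw [hneg] at hCS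
    have e1 : d^2 ≤ (((k - 1:ℕ):ℝ) - 1) * (((k - 1:ℕ):ℝ) + 2*t - d^2) := le_trans hCS hfac
    have e2 : ((k - 1:ℕ):ℝ) * d^2 ≤ (((k - 1:ℕ):ℝ) - 1) * (((k - 1:ℕ):ℝ) + 2*t) := by
      nlinarith [e1]
    nlinarith [e2, ht', hr2R, sq_nonneg d]
  -- conclude
  have hncard : ({v : Fin m | part v = i0}.ncard : ℝ) = (N i0 : ℝ) := by
    have hset : {v : Fin m | part v = i0} = ↑(univ.filter fun v => part v = i0) := by
      ext v; simp
    rw [hset, Set.ncard_coe_finset]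
  rw [hncard, hkr]
  show |(N i0 : ℝ) - μ| < Real.sqrt (2 * t)
  rw [← Real.sqrt_sq_eq_abs]
  exact Real.sqrt_lt_sqrt (sq_nonneg _) hd2

end ERExt
end

section
/- Let k ≥ 3, 2 ≤ s ≤ C(k,2) and r ≥ 2 be integers, and let H be a (K_k,≥s)-free list-colored graph on m vertices. Then for every i ∈ [k-1] with A(k,k-i) ≤ s-1: (i) H contains no copy of K_k all of whose edges have lists of size at least s - A(k,k-i) such that at least A(k,k-i) of its edges have lists of size at least s; and (ii) if moreover i ≤ k-2, then ((k-i-1)/(k-i))·(e_{s-A(k,k-i)}(H) + ⋯ + e_{s-1}(H)) + e_s(H) + ⋯ + e_r(H) ≤ ex(m,K_k). -/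
open SimpleGraph Finset

namespace ERExt

section Aux

attribute [local instance] Classical.propDecidable

/-! ### Bridges between set and finset counting -/

lemma ncard_edge_filter {V : Type*} (G : SimpleGraph V) [Fintype G.edgeSet]
    (P : Sym2 V → Prop) [DecidablePred P] :
    {e | e ∈ G.edgeSet ∧ P e}.ncard = (G.edgeFinset.filter P).card := by
  rw [← Set.ncard_coe_finset]
  congr 1
  ext e
  simp [mem_edgeFinset]

lemma ncard_edgeSet' {V : Type*} (G : SimpleGraph V) [Fintype G.edgeSet] :
    G.edgeSet.ncard = G.edgeFinset.card := by
  rw [← Set.ncard_coe_finset]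
  congr 1
  simp [Set.coe_toFinset, edgeFinset]

/-! ### Greedy choice of colors -/

lemma greedy {V : Type*} {r b : ℕ} (hr : 0 < r) (L : Sym2 V → Finset (Fin r)) (hb : 1 ≤ b)
    (E : Finset (Sym2 V)) (hE : ∀ e ∈ E, b ≤ (L e).card) (P : Finset (Fin r)) :
    ∃ c : Sym2 V → Fin r, (∀ e ∈ E, c e ∈ L e) ∧
      min b (P.card + E.card) ≤ (P ∪ E.image c).card := by
  classical
  induction E using Finset.induction_on generalizing P with
  | empty => exact ⟨fun _ => ⟨0, hr⟩, by simp, by simp [min_le_right]⟩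
  | insert e E' he ih =>
    have hLe : 1 ≤ (L e).card := le_trans hb (hE e (mem_insert_self e E'))
    obtain ⟨col, hcolL, hcol⟩ : ∃ col, col ∈ L e ∧ ((L e \ P).Nonempty → col ∉ P) := by
      by_cases hd : (L e \ P).Nonempty
      · obtain ⟨col, hcol⟩ := hd
        exact ⟨col, (Finset.mem_sdiff.mp hcol).1, fun _ => (Finset.mem_sdiff.mp hcol).2⟩
      · obtain ⟨col, hcol⟩ := Finset.card_pos.mp hLe
        exact ⟨col, hcol, fun h => absurd h hd⟩
    obtain ⟨c', hc'L, hc'card⟩ := ih (fun e' he' => hE e' (mem_insert_of_mem he')) (insert col P)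
    refine ⟨Function.update c' e col, ?_, ?_⟩
    · intro e' he'
      rcases Finset.mem_insert.mp he' with rfl | he'
      · simpa using hcolL
      · have hne : e' ≠ e := fun h => he (h ▸ he')
        simpa [Function.update_of_ne hne] using hc'L e' he'
    · have himg : (insert e E').image (Function.update c' e col) =
          insert col (E'.image c') := by
        rw [Finset.image_insert, Function.update_self]
        congr 1
        apply Finset.image_congr
        intro x hx
        exact Function.update_of_ne (fun h => he (by rw [← h]; exact hx)) _ _
      have hset : P ∪ (insert e E').image (Function.update c' e col)
          = insert col P ∪ E'.image c' := by
        rw [himg]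
        ext x; simp [or_comm, or_left_comm, or_assoc]
      rw [hset]
      refine le_trans ?_ hc'card
      by_cases hd : (L e \ P).Nonempty
      · have : (insert col P).card = P.card + 1 := Finset.card_insert_of_notMem (hcol hd)
        rw [this, Finset.card_insert_of_notMem he]
        omega
      · have hsub : L e ⊆ P := by
          intro x hx
          by_contra hxP
          exact hd ⟨x, Finset.mem_sdiff.mpr ⟨hx, hxP⟩⟩
        have hbP : b ≤ P.card := le_trans (hE e (mem_insert_self e E')) (Finset.card_le_card hsub)
        have h1 : P.card ≤ (insert col P).card := Finset.card_le_card (Finset.subset_insert _ _)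
        exact le_trans (min_le_left _ _) (le_min (by omega) (by omega))

/-! ### Cut partitions -/

def inCut {V : Type*} {p : ℕ} (f : V → Fin p) (e : Sym2 V) : Prop :=
  ∀ u ∈ e, ∀ v ∈ e, u ≠ v → f u ≠ f v

lemma inCut_mk {V : Type*} {p : ℕ} (f : V → Fin p) {u v : V} (huv : u ≠ v) :
    inCut f s(u, v) ↔ f u ≠ f v := by
  constructor
  · intro h
    exact h u (Sym2.mem_mk_left u v) v (Sym2.mem_mk_right u v) huv
  · intro h a ha b hb hab
    rcases Sym2.mem_iff.mp ha with rfl | rfl <;> rcases Sym2.mem_iff.mp hb with rfl | rfl <;>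
      first | exact absurd rfl hab | exact h | exact h.symm

lemma exists_cut {V : Type*} [Fintype V] (G : SimpleGraph V) {p : ℕ} (hp : 1 ≤ p) :
    ∃ f : V → Fin p, (p - 1) * G.edgeSet.ncard ≤
      p * {e | e ∈ G.edgeSet ∧ inCut f e}.ncard := by
  classical
  suffices h : ∀ s : Finset V, ∃ f : V → Fin p,
      (p - 1) * (G.edgeFinset.filter (fun e => ∀ v ∈ e, v ∈ s)).card ≤
        p * ((G.edgeFinset.filter (fun e => ∀ v ∈ e, v ∈ s)).filter (inCut f)).card by
    obtain ⟨f, hf⟩ := h Finset.univ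
    refine ⟨f, ?_⟩
    have heq : G.edgeFinset.filter (fun e => ∀ v ∈ e, v ∈ (Finset.univ : Finset V)) =
        G.edgeFinset := Finset.filter_true_of_mem (by simp)
    rw [heq] at hf
    rwa [ncard_edgeSet', ncard_edge_filter]
  intro s
  induction s using Finset.induction_on with
  | empty =>
    refine ⟨fun _ => ⟨0, hp⟩, ?_⟩
    have : G.edgeFinset.filter (fun e => ∀ v ∈ e, v ∈ (∅ : Finset V)) = ∅ := by
      apply Finset.filter_false_of_mem
      intro e he h
      induction e with
      | _ u v => exact absurd (h u (Sym2.mem_mk_left u v)) (Finset.notMem_empty u)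
    rw [this]
    simp
  | insert a s ha ih =>
    obtain ⟨f, hf⟩ := ih
    set Eold := G.edgeFinset.filter (fun e => ∀ v ∈ e, v ∈ s) with hEold
    set Enew := G.edgeFinset.filter (fun e => ∀ v ∈ e, v ∈ insert a s) with hEnew
    set D := s.filter (fun v => G.Adj a v) with hD
    obtain ⟨c, -, hc⟩ := Finset.exists_min_image (Finset.univ : Finset (Fin p))
      (fun c => (D.filter (fun v => f v = c)).card) ⟨⟨0, hp⟩, Finset.mem_univ _⟩
    have hsum : ∑ c' ∈ Finset.univ, (D.filter (fun v => f v = c')).card = D.card :=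
      (Finset.card_eq_sum_card_fiberwise (fun v _ => Finset.mem_univ (f v))).symm
    have hmin : p * (D.filter (fun v => f v = c)).card ≤ D.card := by
      calc p * (D.filter (fun v => f v = c)).card
          = ∑ _c' ∈ (Finset.univ : Finset (Fin p)), (D.filter (fun v => f v = c)).card := by
            simp [Finset.sum_const, mul_comm]
        _ ≤ ∑ c' ∈ Finset.univ, (D.filter (fun v => f v = c')).card :=
            Finset.sum_le_sum (fun c' _ => hc c' (Finset.mem_univ c'))
        _ = D.card := hsum
    set f' := Function.update f a c with hf'
    refine ⟨f', ?_⟩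
    have hsplit : Enew.filter (fun e => a ∉ e) = Eold := by
      ext e
      simp only [hEnew, hEold, Finset.mem_filter, and_assoc]
      constructor
      · rintro ⟨h1, h2, h3⟩
        refine ⟨h1, fun v hv => ?_⟩
        rcases Finset.mem_insert.mp (h2 v hv) with rfl | h
        · exact absurd hv h3
        · exact h
      · rintro ⟨h1, h2⟩
        exact ⟨h1, fun v hv => Finset.mem_insert_of_mem (h2 v hv),
          fun hae => ha (h2 a hae)⟩
    have himg : Enew.filter (fun e => a ∈ e) = D.image (fun v => s(a, v)) := by
      ext e
      induction e with
      | _ u v =>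
        simp only [hEnew, Finset.mem_filter, Finset.mem_image, hD]
        constructor
        · rintro ⟨⟨h1, h2⟩, h3⟩
          rcases Sym2.mem_iff.mp h3 with h | h
          · subst h
            have hadj : G.Adj a v := mem_edgeFinset.mp h1
            refine ⟨v, ⟨?_, hadj⟩, rfl⟩
            rcases Finset.mem_insert.mp (h2 v (Sym2.mem_mk_right a v)) with h' | h'
            · exact absurd h'.symm hadj.ne
            · exact h'
          · subst h
            have hadj : G.Adj u a := mem_edgeFinset.mp h1
            refine ⟨u, ⟨?_, hadj.symm⟩, Sym2.eq_swap⟩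
            rcases Finset.mem_insert.mp (h2 u (Sym2.mem_mk_left u a)) with h' | h'
            · exact absurd h' hadj.ne
            · exact h'
        · rintro ⟨w, ⟨hws, hadj⟩, hew⟩
          rw [← hew]
          refine ⟨⟨mem_edgeFinset.mpr hadj, ?_⟩, Sym2.mem_mk_left a w⟩
          intro u hu
          rcases Sym2.mem_iff.mp hu with rfl | rfl
          · exact Finset.mem_insert_self u s
          · exact Finset.mem_insert_of_mem hws
    have hinj : Set.InjOn (fun v => s(a, v)) ↑D := fun x _ y _ h => Sym2.congr_right.mp h
    have hDcard : (Enew.filter (fun e => a ∈ e)).card = D.card := by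
      rw [himg, Finset.card_image_of_injOn hinj]
    have hpart : (Enew.filter (fun e => a ∈ e)).card
        + (Enew.filter (fun e => ¬ a ∈ e)).card = Enew.card :=
      Finset.card_filter_add_card_filter_not (fun e => a ∈ e)
    have hEnewcard : Enew.card = Eold.card + D.card := by
      rw [← hsplit, ← hDcard]
      omega
    have hagree : ∀ u ∈ s, f' u = f u := fun u hu =>
      Function.update_of_ne (fun h => ha (by rw [← h]; exact hu)) _ _
    have holdcut : Eold.filter (inCut f') = Eold.filter (inCut f) := by
      apply Finset.filter_congr
      intro e heE
      have hmem : ∀ u ∈ e, u ∈ s := (Finset.mem_filter.mp heE).2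
      constructor
      · intro h u hu v hv huv
        have := h u hu v hv huv
        rwa [hagree u (hmem u hu), hagree v (hmem v hv)] at this
      · intro h u hu v hv huv
        rw [hagree u (hmem u hu), hagree v (hmem v hv)]
        exact h u hu v hv huv
    have hnewcut : (D.filter (fun v => ¬ f v = c)).image (fun v => s(a, v)) ⊆
        Enew.filter (inCut f') := by
      intro e he
      obtain ⟨w, hw, rfl⟩ := Finset.mem_image.mp he
      obtain ⟨hwD, hwc⟩ := Finset.mem_filter.mp hw
      obtain ⟨hws, hadj⟩ := Finset.mem_filter.mp hwD
      refine Finset.mem_filter.mpr ⟨?_, ?_⟩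
      · refine Finset.mem_filter.mpr ⟨mem_edgeFinset.mpr hadj, ?_⟩
        intro u hu
        rcases Sym2.mem_iff.mp hu with rfl | rfl
        · exact Finset.mem_insert_self u s
        · exact Finset.mem_insert_of_mem hws
      · rw [inCut_mk f' hadj.ne, hagree w hws, hf', Function.update_self]
        exact fun h => hwc h.symm
    have holdsub : Eold.filter (inCut f') ⊆ Enew.filter (inCut f') := by
      apply Finset.filter_subset_filter
      intro e he
      obtain ⟨h1, h2⟩ := Finset.mem_filter.mp he
      exact Finset.mem_filter.mpr ⟨h1, fun v hv => Finset.mem_insert_of_mem (h2 v hv)⟩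
    have hdisj : Disjoint (Eold.filter (inCut f'))
        ((D.filter (fun v => ¬ f v = c)).image (fun v => s(a, v))) := by
      rw [Finset.disjoint_left]
      intro e he1 he2
      obtain ⟨w, _, rfl⟩ := Finset.mem_image.mp he2
      have : ∀ u ∈ s(a, w), u ∈ s := (Finset.mem_filter.mp (Finset.mem_filter.mp he1).1).2
      exact ha (this a (Sym2.mem_mk_left a w))
    have hcut' : (Eold.filter (inCut f)).card + (D.filter (fun v => ¬ f v = c)).card ≤
        (Enew.filter (inCut f')).card := by
      rw [← holdcut, ← Finset.card_image_of_injOn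
        (Set.InjOn.mono (fun x hx => by
          exact (Finset.mem_coe.mp hx : x ∈ D.filter _) |> Finset.mem_filter.mp |>.1) hinj),
        ← Finset.card_union_of_disjoint hdisj]
      exact Finset.card_le_card (Finset.union_subset holdsub hnewcut)
    have hfib : (D.filter (fun v => f v = c)).card + (D.filter (fun v => ¬ f v = c)).card
        = D.card := Finset.card_filter_add_card_filter_not (fun v => f v = c)
    obtain ⟨q, rfl⟩ : ∃ q, p = q + 1 := ⟨p - 1, by omega⟩
    set Ec := Eold.card
    set Dc := D.card
    set mc := (D.filter (fun v => f v = c)).card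
    set dd := (D.filter (fun v => ¬ f v = c)).card
    set cutold := (Eold.filter (inCut f)).card
    set cut' := (Enew.filter (inCut f')).card
    have h1 : q * Ec ≤ (q + 1) * cutold := by simpa using hf
    have h2 : q * mc ≤ dd := by nlinarith [hmin, hfib]
    have h3 : cutold + dd ≤ cut' := hcut'
    have hgoal : q * (Ec + Dc) ≤ (q + 1) * cut' := by nlinarith [h1, h2, h3, hfib]
    simpa [hEnewcard] using hgoal

lemma cut_no_clique {V : Type*} {p : ℕ} (f : V → Fin p) (t : Finset V)
    (h : ∀ u ∈ t, ∀ v ∈ t, u ≠ v → f u ≠ f v) (hcard : t.card = p + 1) : False := by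
  classical
  have h1 : t.card = (t.image f).card :=
    (Finset.card_image_of_injOn (fun u hu v hv huv => by
      by_contra hne
      exact h u hu v hv hne huv)).symm
  have h2 : (t.image f).card ≤ p := by
    calc (t.image f).card ≤ (Finset.univ : Finset (Fin p)).card :=
          Finset.card_le_card (Finset.subset_univ _)
      _ = p := by simp
  omega

/-! ### Turán number facts -/

lemma le_turanNum {n q : ℕ} (G : SimpleGraph (Fin n)) (h : G.CliqueFree q) :
    G.edgeSet.ncard ≤ turanNum n q := by
  classical
  apply le_csSup
  · refine ⟨n.choose 2, ?_⟩
    rintro N ⟨G', -, rfl⟩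
    rw [ncard_edgeSet']
    simpa using G'.card_edgeFinset_le_card_choose_two
  · exact ⟨G, h, rfl⟩

lemma turanNum_le {n q : ℕ} (hq : 2 ≤ q) : turanNum n q ≤ n.choose 2 := by
  classical
  apply csSup_le
  · exact ⟨0, ⊥, SimpleGraph.cliqueFree_bot hq, by simp⟩
  · rintro N ⟨G', -, rfl⟩
    rw [ncard_edgeSet']
    simpa using G'.card_edgeFinset_le_card_choose_two

lemma not_cliqueFree_of_turanNum_lt {n q : ℕ} (G : SimpleGraph (Fin n))
    (h : turanNum n q < G.edgeSet.ncard) : ¬ G.CliqueFree q :=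
  fun hcf => absurd (le_turanNum G hcf) (not_le.mpr h)

/-! ### Transfer along an enumeration of a clique -/

lemma exists_enum {m k : ℕ} (t : Finset (Fin m)) (h : t.card = k) :
    ∃ ι : Fin k → Fin m, Function.Injective ι ∧ (∀ a, ι a ∈ t) ∧ ∀ v ∈ t, ∃ a, ι a = v := by
  refine ⟨fun a => (t.equivFin.symm (Fin.cast h.symm a) : Fin m), ?_, ?_, ?_⟩
  · intro a b hab
    have := t.equivFin.symm.injective (Subtype.ext hab)
    exact Fin.cast_injective _ this
  · intro a; exact (t.equivFin.symm (Fin.cast h.symm a)).2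
  · intro v hv
    refine ⟨Fin.cast h (t.equivFin ⟨v, hv⟩), ?_⟩
    simp

lemma comap_edges_ncard {V : Type*} (G : SimpleGraph V) {k : ℕ} {t : Finset V}
    (ι : Fin k → V) (hinj : Function.Injective ι) (hmem : ∀ a, ι a ∈ t)
    (hsurj : ∀ v ∈ t, ∃ a, ι a = v) :
    (G.comap ι).edgeSet.ncard = (cliqueEdges G t).ncard := by
  have himg : Sym2.map ι '' (G.comap ι).edgeSet = cliqueEdges G t := by
    ext e
    constructor
    · rintro ⟨e', he', rfl⟩
      induction e' with
      | _ a b =>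
        have hadj : G.Adj (ι a) (ι b) := (G.mem_edgeSet).mp he'
        rw [Sym2.map_pair_eq]
        refine ⟨(G.mem_edgeSet).mpr hadj, ?_⟩
        intro v hv
        rcases Sym2.mem_iff.mp hv with rfl | rfl
        · exact hmem a
        · exact hmem b
    · intro he
      induction e with
      | _ u v =>
        obtain ⟨h1, h2⟩ := he
        have hadj : G.Adj u v := (G.mem_edgeSet).mp h1
        obtain ⟨a, rfl⟩ := hsurj u (h2 u (Sym2.mem_mk_left u v))
        obtain ⟨b, rfl⟩ := hsurj v (h2 v (Sym2.mem_mk_right _ v))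
        exact ⟨s(a, b), (G.mem_edgeSet).mpr hadj, Sym2.map_pair_eq ι a b⟩
  rw [← himg, Set.ncard_image_of_injective _ (Sym2.map.injective hinj)]

lemma clique_of_comap_clique {V : Type*} (G : SimpleGraph V) {k n : ℕ}
    (ι : Fin k → V) (hinj : Function.Injective ι) {u : Finset (Fin k)}
    (h : (G.comap ι).IsNClique n u) : G.IsNClique n (u.image ι) := by
  classical
  constructor
  · intro x hx y hy hxy
    obtain ⟨a, ha, rfl⟩ := Finset.mem_image.mp (Finset.mem_coe.mp hx)
    obtain ⟨b, hb, rfl⟩ := Finset.mem_image.mp (Finset.mem_coe.mp hy)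
    exact h.1 ha hb (fun hab => hxy (by rw [hab]))
  · rw [Finset.card_image_of_injective _ hinj]
    exact h.2

/-! ### The number of edges of a clique -/

lemma cliqueEdges_ncard {m k : ℕ} (H : SimpleGraph (Fin m)) {t : Finset (Fin m)}
    (h : H.IsNClique k t) : (cliqueEdges H t).ncard = k.choose 2 := by
  classical
  have hset : cliqueEdges H t = ↑(t.sym2.filter (fun e => ¬ e.IsDiag)) := by
    ext e
    induction e with
    | _ u v =>
      simp only [cliqueEdges, Set.mem_setOf_eq, Finset.coe_filter, Finset.mem_sym2_iff]
      constructor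
      · intro ⟨h1, h2⟩
        have hadj : H.Adj u v := (H.mem_edgeSet).mp h1
        exact ⟨h2, by simp [Sym2.mk_isDiag_iff, hadj.ne]⟩
      · intro ⟨h1, h2⟩
        have hne : u ≠ v := by simpa [Sym2.mk_isDiag_iff] using h2
        refine ⟨(H.mem_edgeSet).mpr (h.1 (h1 u (Sym2.mem_mk_left u v))
          (h1 v (Sym2.mem_mk_right u v)) hne), h1⟩
    -- note: membership conditions
  rw [hset, Set.ncard_coe_finset]
  have hdiag : (t.sym2.filter (fun e => e.IsDiag)).card = t.card := by
    have heq : t.sym2.filter (fun e => e.IsDiag) = t.image (fun v => s(v, v)) := by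
      ext e
      induction e with
      | _ u v =>
        simp only [Finset.mem_filter, Finset.mem_sym2_iff, Finset.mem_image,
          Sym2.mk_isDiag_iff]
        constructor
        · intro ⟨h1, h2⟩
          exact ⟨u, h1 u (Sym2.mem_mk_left u v), by rw [h2]⟩
        · rintro ⟨w, hw, hwe⟩
          have hu : u = w := by
            have h3 : u ∈ s(w, w) := by rw [hwe]; exact Sym2.mem_mk_left u v
            rcases Sym2.mem_iff.mp h3 with h | h <;> exact h
          have hv : v = w := by
            have h3 : v ∈ s(w, w) := by rw [hwe]; exact Sym2.mem_mk_right u v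
            rcases Sym2.mem_iff.mp h3 with h | h <;> exact h
          subst hu
          subst hv
          exact ⟨fun a ha => by rcases Sym2.mem_iff.mp ha with rfl | rfl <;> exact hw, rfl⟩
    rw [heq]
    apply Finset.card_image_of_injOn
    intro x _ y _ hxy
    have h3 : x ∈ s(y, y) := by rw [← (by exact hxy : s(x, x) = s(y, y))]; exact Sym2.mem_mk_left x x
    rcases Sym2.mem_iff.mp h3 with h | h <;> exact h
  have hfil : (t.sym2.filter (fun e => ¬ e.IsDiag)).card + t.card = t.sym2.card := by
    rw [← hdiag]
    have := Finset.card_filter_add_card_filter_not (s := t.sym2)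
      (p := fun e => e.IsDiag)
    omega
  have hsym2 : t.sym2.card = (t.card + 1).choose 2 := Finset.card_sym2 t
  have hchoose : (t.card + 1).choose 2 = t.card.choose 2 + t.card := by
    rw [Nat.choose_succ_succ]
    simp [Nat.choose_one_right, Nat.add_comm]
  rw [h.2] at *
  omega

/-! ### Subgraphs given by an edge predicate -/

def subGraphP {V : Type*} (H : SimpleGraph V) (P : Sym2 V → Prop) : SimpleGraph V where
  Adj u v := H.Adj u v ∧ P s(u, v)
  symm := ⟨fun u v h => ⟨h.1.symm, by rw [Sym2.eq_swap]; exact h.2⟩⟩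
  loopless := ⟨fun u h => H.loopless.irrefl u h.1⟩

lemma subGraphP_edgeSet {V : Type*} (H : SimpleGraph V) (P : Sym2 V → Prop) (e : Sym2 V) :
    e ∈ (subGraphP H P).edgeSet ↔ e ∈ H.edgeSet ∧ P e := by
  induction e with
  | _ u v => exact Iff.rfl

lemma subGraphP_le {V : Type*} (H : SimpleGraph V) (P : Sym2 V → Prop) :
    subGraphP H P ≤ H := fun _ _ h => h.1

/-! ### Sum of `ej` over an interval -/

lemma ej_sum {m r : ℕ} (H : SimpleGraph (Fin m)) (L : Sym2 (Fin m) → Finset (Fin r))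
    (a b : ℕ) :
    ∑ j ∈ Finset.Icc a b, ej H L j =
      {e | e ∈ H.edgeSet ∧ (L e).card ∈ Finset.Icc a b}.ncard := by
  classical
  rw [ncard_edge_filter]
  rw [Finset.card_eq_sum_card_fiberwise
    (f := fun e => (L e).card) (t := Finset.Icc a b)
    (s := H.edgeFinset.filter (fun e => (L e).card ∈ Finset.Icc a b))
    (fun e he => (Finset.mem_filter.mp (Finset.mem_coe.mp he)).2)]
  apply Finset.sum_congr rfl
  intro j hj
  have hfe : (H.edgeFinset.filter (fun e => (L e).card ∈ Finset.Icc a b)).filter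
      (fun e => (L e).card = j) = H.edgeFinset.filter (fun e => (L e).card = j) := by
    rw [Finset.filter_filter]
    apply Finset.filter_congr
    intro e _
    constructor
    · exact fun h => h.2
    · intro h
      exact ⟨by rw [h]; exact hj, h⟩
  rw [hfe, ej, ncard_edge_filter]

end Aux

attribute [local instance] Classical.propDecidable

/-- **Claim 3.1.** -/
theorem claim_list_colored (k s r m : ℕ) (hk : 3 ≤ k) (hs2 : 2 ≤ s) (hsk : s ≤ k.choose 2)
    (hr2 : 2 ≤ r) (H : SimpleGraph (Fin m)) (L : Sym2 (Fin m) → Finset (Fin r))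
    (hL : ∀ e ∈ H.edgeSet, (L e).Nonempty) (hfree : GeSFree r k s H L)
    (i : ℕ) (hi1 : 1 ≤ i) (hik : i ≤ k - 1) (hA : Afun k (k - i) ≤ s - 1) :
    (¬ ∃ t : Finset (Fin m), H.IsNClique k t ∧
        (∀ e ∈ cliqueEdges H t, s - Afun k (k - i) ≤ (L e).card) ∧
        Afun k (k - i) ≤ Set.ncard {e | e ∈ cliqueEdges H t ∧ s ≤ (L e).card}) ∧
    (i ≤ k - 2 →
      (((k : ℝ) - (i : ℝ) - 1) / ((k : ℝ) - (i : ℝ))) *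
          (∑ jj ∈ Finset.Icc (s - Afun k (k - i)) (s - 1), (ej H L jj : ℝ))
        + (∑ jj ∈ Finset.Icc s r, (ej H L jj : ℝ)) ≤ (turanNum m k : ℝ)) := by
  classical
  have hr0 : 0 < r := by omega
  set A := Afun k (k - i) with hAdef
  have hA1 : 1 ≤ s - A := by omega
  have part1 : ¬ ∃ t : Finset (Fin m), H.IsNClique k t ∧
      (∀ e ∈ cliqueEdges H t, s - A ≤ (L e).card) ∧
      A ≤ Set.ncard {e | e ∈ cliqueEdges H t ∧ s ≤ (L e).card} := by
    rintro ⟨t, hclq, hlist, hbig⟩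
    set CE := H.edgeFinset.filter (fun e => ∀ v ∈ e, v ∈ t) with hCE
    have hCEset : cliqueEdges H t = ↑CE := by
      ext e
      simp [cliqueEdges, hCE, mem_edgeFinset]
    have hCEcard : CE.card = k.choose 2 := by
      have h1 := cliqueEdges_ncard H hclq
      rwa [hCEset, Set.ncard_coe_finset] at h1
    set F := CE.filter (fun e => s ≤ (L e).card) with hF
    have hbig' : A ≤ F.card := by
      have hseteq : {e | e ∈ cliqueEdges H t ∧ s ≤ (L e).card} = ↑F := by
        ext e
        simp only [Set.mem_setOf_eq, hCEset, hF, Finset.coe_filter, Finset.mem_coe]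
      rwa [hseteq, Set.ncard_coe_finset] at hbig
    obtain ⟨F', hF'F, hF'card⟩ := Finset.exists_subset_card_eq hbig'
    have hF'CE : F' ⊆ CE := hF'F.trans (Finset.filter_subset _ _)
    have hE1 : ∀ e ∈ CE \ F', s - A ≤ (L e).card := fun e he =>
      hlist e (by rw [hCEset]; exact Finset.mem_coe.mpr (Finset.mem_sdiff.mp he).1)
    obtain ⟨c1, hc1L, hc1card⟩ := greedy hr0 L hA1 (CE \ F') hE1 ∅
    have hE1card : (CE \ F').card = k.choose 2 - A := by
      rw [Finset.card_sdiff_of_subset hF'CE, hCEcard, hF'card]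
    have h1 : s - A ≤ ((CE \ F').image c1).card := by
      have hmin : min (s - A) ((∅ : Finset (Fin r)).card + (CE \ F').card) = s - A := by
        rw [Finset.card_empty, hE1card]
        have : A ≤ s := by omega
        omega
      rw [hmin] at hc1card
      simpa using hc1card
    have hE2 : ∀ e ∈ F', s ≤ (L e).card := fun e he => (Finset.mem_filter.mp (hF'F he)).2
    obtain ⟨c2, hc2L, hc2card⟩ := greedy hr0 L (by omega : 1 ≤ s) F' hE2 ((CE \ F').image c1)
    have h2 : s ≤ (((CE \ F').image c1) ∪ F'.image c2).card := by
      refine le_trans ?_ hc2card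
      rw [hF'card]
      have hAs : A ≤ s := by omega
      exact le_min le_rfl (by omega)
    set c : Sym2 (Fin m) → Fin r := fun e => if e ∈ F' then c2 e else c1 e with hc
    apply hfree
    refine ⟨t, c, hclq, ?_, ?_⟩
    · intro e he
      rw [hCEset] at he
      have heCE : e ∈ CE := Finset.mem_coe.mp he
      by_cases hf' : e ∈ F'
      · simpa [hc, hf'] using hc2L e hf'
      · simpa [hc, hf'] using hc1L e (Finset.mem_sdiff.mpr ⟨heCE, hf'⟩)
    · have hseteq : {col : Fin r | ∃ e ∈ cliqueEdges H t, c e = col} = ↑(CE.image c) := by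
        ext col
        simp only [Set.mem_setOf_eq, hCEset, Finset.coe_image, Set.mem_image,
          Finset.mem_coe]
      rw [hseteq, Set.ncard_coe_finset]
      have h3 : (CE \ F') ∪ F' = CE := Finset.sdiff_union_of_subset hF'CE
      have himgeq : CE.image c = ((CE \ F').image c1) ∪ (F'.image c2) := by
        calc CE.image c = ((CE \ F') ∪ F').image c := by rw [h3]
          _ = (CE \ F').image c ∪ F'.image c := Finset.image_union _ _
          _ = (CE \ F').image c1 ∪ F'.image c2 := by
              congr 1
              · apply Finset.image_congr
                intro e he
                have hnot := (Finset.mem_sdiff.mp (Finset.mem_coe.mp he)).2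
                simp [hc, hnot]
              · apply Finset.image_congr
                intro e he
                have hin := Finset.mem_coe.mp he
                simp [hc, hin]
      rw [himgeq]
      exact h2
  refine ⟨part1, ?_⟩
  intro hik2
  have hik' : i + 2 ≤ k := by omega
  set p := k - i with hpdef
  have hp2 : 2 ≤ p := by omega
  set HB := subGraphP H (fun e => s ≤ (L e).card) with hHB
  set HM := subGraphP H (fun e => (L e).card ∈ Finset.Icc (s - A) (s - 1)) with hHM
  obtain ⟨f, hcut⟩ := exists_cut HM (p := p) (by omega)
  set MC := subGraphP HM (inCut f) with hMC
  set G' := HB ⊔ MC with hG'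
  have heB : ∀ e, e ∈ HB.edgeSet ↔ e ∈ H.edgeSet ∧ s ≤ (L e).card :=
    fun e => subGraphP_edgeSet H _ e
  have heM : ∀ e, e ∈ HM.edgeSet ↔
      e ∈ H.edgeSet ∧ (L e).card ∈ Finset.Icc (s - A) (s - 1) :=
    fun e => subGraphP_edgeSet H _ e
  have heMC : ∀ e, e ∈ MC.edgeSet ↔ e ∈ HM.edgeSet ∧ inCut f e :=
    fun e => subGraphP_edgeSet HM _ e
  have hG'leH : G' ≤ H := sup_le (subGraphP_le H _)
    (le_trans (subGraphP_le HM _) (subGraphP_le H _))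
  have hfreeG' : G'.CliqueFree k := by
    intro t hclq
    have hclqH : H.IsNClique k t := SimpleGraph.IsNClique.mono hG'leH hclq
    set CE := H.edgeFinset.filter (fun e => ∀ v ∈ e, v ∈ t) with hCE
    have hCEset : cliqueEdges H t = ↑CE := by
      ext e
      simp [cliqueEdges, hCE, mem_edgeFinset]
    have hCEcard : CE.card = k.choose 2 := by
      have h1 := cliqueEdges_ncard H hclqH
      rwa [hCEset, Set.ncard_coe_finset] at h1
    have hCEG' : ∀ e ∈ CE,
        s ≤ (L e).card ∨ ((L e).card ∈ Finset.Icc (s - A) (s - 1) ∧ inCut f e) := by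
      intro e
      induction e with
      | _ u v =>
        intro he
        obtain ⟨he1, he2⟩ := Finset.mem_filter.mp he
        have hadj : H.Adj u v := (H.mem_edgeSet).mp (mem_edgeFinset.mp he1)
        have hG'uv : G'.Adj u v := hclq.1 (Finset.mem_coe.mpr (he2 u (Sym2.mem_mk_left u v)))
          (Finset.mem_coe.mpr (he2 v (Sym2.mem_mk_right u v))) hadj.ne
        rw [hG', SimpleGraph.sup_adj] at hG'uv
        rcases hG'uv with hB | hMCe
        · left; exact hB.2
        · right; exact ⟨hMCe.1.2, hMCe.2⟩
    set F := CE.filter (fun e => s ≤ (L e).card) with hF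
    have hFlt : F.card < A := by
      by_contra hge
      push_neg at hge
      apply part1
      refine ⟨t, hclqH, ?_, ?_⟩
      · intro e he
        rw [hCEset] at he
        rcases hCEG' e (Finset.mem_coe.mp he) with h | h
        · exact le_trans (Nat.sub_le s A) h
        · exact (Finset.mem_Icc.mp h.1).1
      · have hseteq : {e | e ∈ cliqueEdges H t ∧ s ≤ (L e).card} = ↑F := by
          ext e
          simp only [Set.mem_setOf_eq, hCEset, hF, Finset.coe_filter, Finset.mem_coe]
        rw [hseteq, Set.ncard_coe_finset]
        exact hge
    set Fm := CE.filter
      (fun e => (L e).card ∈ Finset.Icc (s - A) (s - 1) ∧ inCut f e) with hFm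
    have hcover : CE ⊆ F ∪ Fm := by
      intro e he
      rcases hCEG' e he with h | h
      · exact Finset.mem_union_left _ (Finset.mem_filter.mpr ⟨he, h⟩)
      · exact Finset.mem_union_right _ (Finset.mem_filter.mpr ⟨he, h⟩)
    have hFmge : k.choose 2 ≤ F.card + Fm.card := by
      calc k.choose 2 = CE.card := hCEcard.symm
        _ ≤ (F ∪ Fm).card := Finset.card_le_card hcover
        _ ≤ F.card + Fm.card := Finset.card_union_le _ _
    have hT : turanNum k (p + 1) ≤ k.choose 2 := turanNum_le (by omega)
    have hAval : A = k.choose 2 - turanNum k (p + 1) := by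
      rw [hAdef, hpdef]
      rfl
    have hTlt : turanNum k (p + 1) < Fm.card := by omega
    obtain ⟨ι, hinj, hmem, hsurj⟩ := exists_enum t hclqH.2
    have hMk := comap_edges_ncard MC ι hinj hmem hsurj
    have hFmeq : cliqueEdges MC t = ↑Fm := by
      ext e
      simp only [cliqueEdges, Set.mem_setOf_eq, heMC e, heM e, hFm, hCE, Finset.coe_filter,
        Finset.mem_coe, Finset.mem_filter, mem_edgeFinset]
      tauto
    have hnotfree := not_cliqueFree_of_turanNum_lt (MC.comap ι)
      (by rw [hMk, hFmeq, Set.ncard_coe_finset]; exact hTlt)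
    rw [SimpleGraph.CliqueFree] at hnotfree
    push_neg at hnotfree
    obtain ⟨u, hu⟩ := hnotfree
    have hcl' := clique_of_comap_clique MC ι hinj hu
    refine cut_no_clique f _ ?_ hcl'.2
    intro x hx y hy hxy
    have hadjMC : MC.Adj x y := hcl'.1 (Finset.mem_coe.mpr hx) (Finset.mem_coe.mpr hy) hxy
    exact (inCut_mk f hxy).mp hadjMC.2
  have hEbound : G'.edgeSet.ncard ≤ turanNum m k := le_turanNum G' hfreeG'
  have hsplitE : G'.edgeSet = HB.edgeSet ∪ MC.edgeSet := by
    rw [hG']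
    exact SimpleGraph.edgeSet_sup _ _
  have hdisjE : Disjoint HB.edgeSet MC.edgeSet := by
    rw [Set.disjoint_left]
    intro e heB' heMC'
    have h1 : s ≤ (L e).card := ((heB e).mp heB').2
    have h2 : (L e).card ≤ s - 1 :=
      (Finset.mem_Icc.mp ((heM e).mp ((heMC e).mp heMC').1).2).2
    omega
  have hncardsplit : G'.edgeSet.ncard = HB.edgeSet.ncard + MC.edgeSet.ncard := by
    rw [hsplitE, Set.ncard_union_eq hdisjE (Set.toFinite _) (Set.toFinite _)]
  have hsum1 : ∑ jj ∈ Finset.Icc (s - A) (s - 1), ej H L jj = HM.edgeSet.ncard := by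
    rw [ej_sum]
    congr 1
    ext e
    rw [heM e]
    rfl
  have hsum2 : ∑ jj ∈ Finset.Icc s r, ej H L jj = HB.edgeSet.ncard := by
    rw [ej_sum]
    congr 1
    ext e
    rw [heB e]
    simp only [Finset.mem_Icc, Set.mem_setOf_eq]
    constructor
    · rintro ⟨h1, h2, -⟩
      exact ⟨h1, h2⟩
    · rintro ⟨h1, h2⟩
      exact ⟨h1, h2, le_trans (Finset.card_le_univ _) (by simp)⟩
  have hMCeq : MC.edgeSet = {e | e ∈ HM.edgeSet ∧ inCut f e} := by
    ext e
    exact heMC e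
  rw [hMCeq] at hncardsplit
  have hc1 : (∑ jj ∈ Finset.Icc (s - A) (s - 1), (ej H L jj : ℝ)) =
      ((HM.edgeSet.ncard : ℕ) : ℝ) := by
    rw [← hsum1]
    push_cast
    ring
  have hc2 : (∑ jj ∈ Finset.Icc s r, (ej H L jj : ℝ)) =
      ((HB.edgeSet.ncard : ℕ) : ℝ) := by
    rw [← hsum2]
    push_cast
    ring
  rw [hc1, hc2]
  have hkast1 : (k : ℝ) - i - 1 = ((p - 1 : ℕ) : ℝ) := by
    have h1 : (p - 1 : ℕ) = k - (i + 1) := by omega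
    rw [h1, Nat.cast_sub (by omega : i + 1 ≤ k)]
    push_cast
    ring
  have hkast2 : (k : ℝ) - i = ((p : ℕ) : ℝ) := by
    rw [hpdef, Nat.cast_sub (by omega : i ≤ k)]
  rw [hkast1, hkast2]
  have hcutR : ((p - 1 : ℕ) : ℝ) * (HM.edgeSet.ncard : ℝ) ≤
      (p : ℝ) * ({e | e ∈ HM.edgeSet ∧ inCut f e}.ncard : ℝ) := by
    exact_mod_cast hcut
  have hpR : (0 : ℝ) < (p : ℝ) := by
    have : (0 : ℕ) < p := by omega
    exact_mod_cast this
  have hfrac : ((p - 1 : ℕ) : ℝ) / (p : ℝ) * (HM.edgeSet.ncard : ℝ) ≤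
      ({e | e ∈ HM.edgeSet ∧ inCut f e}.ncard : ℝ) := by
    rw [div_mul_eq_mul_div, div_le_iff₀ hpR]
    linarith [hcutR]
  have hfinal : (HB.edgeSet.ncard : ℝ) + ({e | e ∈ HM.edgeSet ∧ inCut f e}.ncard : ℝ) ≤
      (turanNum m k : ℝ) := by
    have h := hEbound
    rw [hncardsplit] at h
    exact_mod_cast h
  linarith

end ERExt
end

section
/- Let k ≥ 4 and let s be an integer with s_0(k) < s ≤ s_1(k). Then there exists a largest p* ∈ {2,…,k-1} with b(k,p*,k-1) ≤ C(k,2) - s + 2, the minimum L_opt(k,s) is attained at the pair (p*, k-1), i.e. L_opt(k,s) = L(k,s,p*,k-1) = 1 + 2p*/(p*-1), and 3 < L_opt(k,s) ≤ 5. -/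
open SimpleGraph Finset

namespace ERExt

set_option maxHeartbeats 1000000 in
/-- **Claim 3.2(a).** -/
theorem claim_Lopt_mid (k s : ℕ) (hk : 4 ≤ k) (hlo : s0 k < s) (hhi : s ≤ s1 k) :
    ∃ pstar : ℕ,
      (2 ≤ pstar ∧ pstar ≤ k - 1 ∧ bfun k pstar (k - 1) ≤ k.choose 2 - s + 2) ∧
      (∀ p : ℕ, 2 ≤ p → p ≤ k - 1 → bfun k p (k - 1) ≤ k.choose 2 - s + 2 → p ≤ pstar) ∧
      Lopt k s = Lfun k s pstar (k - 1) ∧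
      Lfun k s pstar (k - 1) = 1 + 2 * (pstar : ℝ) / ((pstar : ℝ) - 1) ∧
      3 < Lopt k s ∧ Lopt k s ≤ 5 := by
  have hc2 : k.choose 2 = k * (k - 1) / 2 := Nat.choose_two_right k
  have hk3 : k * 3 ≤ k * (k - 1) := Nat.mul_le_mul_left k (by omega)
  have hmk2 : k / 2 ≤ k.choose 2 - s + 2 := by
    have h1 : s ≤ k.choose 2 - k / 2 + 2 := hhi
    omega
  have hb2 : bfun k 2 (k - 1) ≤ k.choose 2 - s + 2 := by
    have h0 : (k - k / 2 * 2).choose 2 = 0 := Nat.choose_eq_zero_of_lt (by omega)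
    simp only [bfun, Nat.choose_self, mul_one, h0]
    omega
  obtain ⟨pstar, hmem, hmax⟩ :
      ∃ pstar : ℕ,
        (2 ≤ pstar ∧ pstar ≤ k - 1 ∧ bfun k pstar (k - 1) ≤ k.choose 2 - s + 2) ∧
        ∀ p : ℕ, 2 ≤ p → p ≤ k - 1 → bfun k p (k - 1) ≤ k.choose 2 - s + 2 → p ≤ pstar := by
    have hbdd : BddAbove {p : ℕ | 2 ≤ p ∧ p ≤ k - 1 ∧ bfun k p (k - 1) ≤ k.choose 2 - s + 2} :=
      ⟨k - 1, fun p hp => hp.2.1⟩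
    have h2mem : 2 ∈ {p : ℕ | 2 ≤ p ∧ p ≤ k - 1 ∧ bfun k p (k - 1) ≤ k.choose 2 - s + 2} :=
      ⟨le_refl 2, by omega, hb2⟩
    exact ⟨_, Nat.sSup_mem ⟨2, h2mem⟩ hbdd, fun p h1 h2 h3 => le_csSup hbdd ⟨h1, h2, h3⟩⟩
  obtain ⟨hp2, hpk1, hpb⟩ := hmem
  -- real casts
  have hkR : ((k - 1 : ℕ) : ℝ) = (k : ℝ) - 1 := by
    push_cast [Nat.cast_sub (show 1 ≤ k by omega)]; ring
  have hkpos : (0 : ℝ) < (k : ℝ) - 1 := by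
    have : (4 : ℝ) ≤ (k : ℝ) := by exact_mod_cast hk
    linarith
  have hP2 : (2 : ℝ) ≤ (pstar : ℝ) := by exact_mod_cast hp2
  have hPpos : (0 : ℝ) < (pstar : ℝ) - 1 := by linarith
  -- Lfun at (pstar, k-1) simplifies
  have hLeq : Lfun k s pstar (k - 1) = 1 + 2 * (pstar : ℝ) / ((pstar : ℝ) - 1) := by
    simp only [Lfun, hkR]
    field_simp
  -- the target value is a lower bound for the Lopt set
  have key : ∀ x ∈ {x | ∃ p j : ℕ, 2 ≤ p ∧ p ≤ k - 1 ∧ 1 ≤ j ∧ j ≤ k - 1 ∧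
      bfun k p j ≤ k.choose 2 - s + 2 ∧ x = Lfun k s p j}, Lfun k s pstar (k - 1) ≤ x := by
    rintro x ⟨p, j, hp2', hpk', hj1, hjk, hb, rfl⟩
    rw [hLeq]
    have hjR : (1 : ℝ) ≤ (j : ℝ) := by exact_mod_cast hj1
    have hjkR : (j : ℝ) ≤ (k : ℝ) - 1 := by
      have h := (Nat.cast_le (α := ℝ)).2 hjk
      rwa [hkR] at h
    have hpR : (2 : ℝ) ≤ (p : ℝ) := by exact_mod_cast hp2'
    have hppos : (0 : ℝ) < (p : ℝ) - 1 := by linarith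
    have hjppos : (0 : ℝ) < (j : ℝ) * ((p : ℝ) - 1) := by positivity
    simp only [Lfun]
    rcases le_or_gt p pstar with hple | hpgt
    · -- p ≤ pstar : monotonicity in both p and j
      have hpleR : (p : ℝ) ≤ (pstar : ℝ) := by exact_mod_cast hple
      have hdiv : 2 * (pstar : ℝ) / ((pstar : ℝ) - 1) ≤
          2 * (p : ℝ) * ((k : ℝ) - 1) / ((j : ℝ) * ((p : ℝ) - 1)) := by
        rw [div_le_div_iff₀ hPpos hjppos]
        nlinarith [mul_nonneg (sub_nonneg.2 hjkR)
            (mul_nonneg (by linarith : (0:ℝ) ≤ (p:ℝ)) (by linarith : (0:ℝ) ≤ (pstar:ℝ) - 1)),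
          mul_nonneg (sub_nonneg.2 hpleR) (by linarith : (0:ℝ) ≤ (j:ℝ))]
      linarith
    · -- p > pstar : then b(k,p,k-1) > m, forcing j*p ≤ k
      have hnot : k.choose 2 - s + 2 < bfun k p (k - 1) := by
        by_contra hcon
        exact absurd (hmax p hp2' hpk' (by omega)) (by omega)
      have hjp : j * p ≤ k := by
        simp only [bfun] at hb hnot
        have hrem : k - k / p * p < p := by
          have h := Nat.div_add_mod' k p
          have := Nat.mod_lt k (show 0 < p by omega)
          omega
        have hchle : (k - k / p * p).choose 2 ≤ p.choose 2 :=
          Nat.choose_le_choose 2 (le_of_lt hrem)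
        have hjle : j ≤ k / p := by
          by_contra hcon
          push_neg at hcon
          have h1 : (k / p + 1) * p.choose 2 ≤ j * p.choose 2 :=
            Nat.mul_le_mul_right _ (by omega)
          have hexp : (k / p + 1) * p.choose 2 = k / p * p.choose 2 + p.choose 2 := by ring
          omega
        calc j * p ≤ k / p * p := Nat.mul_le_mul_right p hjle
          _ ≤ k := Nat.div_mul_le_self k p
      have hjpR : (j : ℝ) * (p : ℝ) ≤ (k : ℝ) := by exact_mod_cast hjp
      have hp3 : (3 : ℝ) ≤ (p : ℝ) := by
        have h3 : 3 ≤ p := by omega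
        exact_mod_cast h3
      have hk4 : (4 : ℝ) ≤ (k : ℝ) := by exact_mod_cast hk
      have hleft : 2 * (pstar : ℝ) / ((pstar : ℝ) - 1) ≤ 4 := by
        rw [div_le_iff₀ hPpos]; linarith
      have hright : (4 : ℝ) ≤ 2 * (p : ℝ) * ((k : ℝ) - 1) / ((j : ℝ) * ((p : ℝ) - 1)) := by
        rw [le_div_iff₀ hjppos]
        have h1 : 4 * ((j : ℝ) * ((p : ℝ) - 1)) ≤ 4 * (k : ℝ) - 4 := by nlinarith
        have h2 : 4 * (k : ℝ) - 4 ≤ 2 * (p : ℝ) * ((k : ℝ) - 1) := by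
          nlinarith [mul_nonneg (by linarith : (0:ℝ) ≤ (p:ℝ) - 3)
            (by linarith : (0:ℝ) ≤ (k:ℝ) - 1)]
        linarith
      linarith
  have hmemset : Lfun k s pstar (k - 1) ∈ {x | ∃ p j : ℕ, 2 ≤ p ∧ p ≤ k - 1 ∧ 1 ≤ j ∧
      j ≤ k - 1 ∧ bfun k p j ≤ k.choose 2 - s + 2 ∧ x = Lfun k s p j} :=
    ⟨pstar, k - 1, hp2, hpk1, by omega, le_refl _, hpb, rfl⟩
  have hLopt : Lopt k s = Lfun k s pstar (k - 1) := IsLeast.csInf_eq ⟨hmemset, key⟩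
  refine ⟨pstar, ⟨hp2, hpk1, hpb⟩, hmax, hLopt, hLeq, ?_, ?_⟩
  · rw [hLopt, hLeq]
    have h : (2 : ℝ) < 2 * (pstar : ℝ) / ((pstar : ℝ) - 1) := by
      rw [lt_div_iff₀ hPpos]; linarith
    linarith
  · rw [hLopt, hLeq]
    have h : 2 * (pstar : ℝ) / ((pstar : ℝ) - 1) ≤ 4 := by
      rw [div_le_iff₀ hPpos]; linarith
    linarith

end ERExt
end

section
/- Let k ≥ 4 and let s be an integer with s_1(k) < s ≤ C(k,2). Then the minimum L_opt(k,s) is attained at the pair (p,j) = (2, C(k,2) - s + 2), and L_opt(k,s) = 1 + 4(k-1)/(C(k,2) - s + 2) > 9. -/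
open SimpleGraph Finset

namespace ERExt

private lemma two_mul_choose_two (n : ℕ) : 2 * n.choose 2 = n * (n - 1) := by
  rcases n with _ | m
  · simp
  · rw [Nat.choose_two_right]
    have h : 2 ∣ (m + 1) * (m + 1 - 1) := by
      simpa [Nat.mul_comm] using (Nat.even_mul_succ_self m).two_dvd
    exact Nat.mul_div_cancel' h

private lemma second_branch_ge (k p : ℕ) (hp : 2 ≤ p) (hpk : p ≤ k) :
    k / 2 ≤ (k / p) * p.choose 2 + (k - (k / p) * p).choose 2 := by
  set q := k / p with hq
  set r := k - q * p with hr
  have hqp : q * p ≤ k := Nat.div_mul_le_self k p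
  have hk' : q * p + r = k := by omega
  have h1 : 2 * p.choose 2 = p * (p - 1) := two_mul_choose_two p
  have h2 : 2 * r.choose 2 = r * (r - 1) := two_mul_choose_two r
  have hq1 : 1 ≤ q := (Nat.one_le_div_iff (by omega)).mpr hpk
  have ha : q * p ≤ q * (p * (p - 1)) :=
    Nat.mul_le_mul_left q (Nat.le_mul_of_pos_right p (by omega))
  have hb : r ≤ r * (r - 1) + 1 := by
    rcases Nat.eq_zero_or_pos r with h | h
    · simp [h]
    · have h3 : r - 1 ≤ r * (r - 1) := Nat.le_mul_of_pos_left (r - 1) h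
      calc r = (r - 1) + 1 := by omega
        _ ≤ r * (r - 1) + 1 := Nat.add_le_add_right h3 1
  have e : 2 * (q * p.choose 2 + r.choose 2) = q * (p * (p - 1)) + r * (r - 1) := by
    rw [Nat.mul_add, Nat.mul_left_comm, h1, h2]
  have key : k ≤ 2 * (q * p.choose 2 + r.choose 2) + 1 := by
    calc k = q * p + r := hk'.symm
      _ ≤ q * (p * (p - 1)) + (r * (r - 1) + 1) := Nat.add_le_add ha hb
      _ = 2 * (q * p.choose 2 + r.choose 2) + 1 := by rw [e]; ring
  generalize hX : q * p.choose 2 + r.choose 2 = X at key ⊢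
  omega

set_option maxHeartbeats 1000000 in
/-- **Claim 3.2(b).** -/
theorem claim_Lopt_high (k s : ℕ) (hk : 4 ≤ k) (hlo : s1 k < s) (hhi : s ≤ k.choose 2) :
    (1 ≤ k.choose 2 - s + 2 ∧ k.choose 2 - s + 2 ≤ k - 1 ∧
      bfun k 2 (k.choose 2 - s + 2) ≤ k.choose 2 - s + 2) ∧
    Lopt k s = Lfun k s 2 (k.choose 2 - s + 2) ∧
    Lopt k s = 1 + 4 * ((k : ℝ) - 1) / ((k.choose 2 : ℝ) - (s : ℝ) + 2) ∧
    9 < Lopt k s := by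
  have hkk : k ≤ k.choose 2 := by
    rw [Nat.choose_two_right]
    rw [Nat.le_div_iff_mul_le (by norm_num)]
    have : k * 2 ≤ k * (k - 1) := Nat.mul_le_mul_left k (by omega)
    exact this
  rw [s1] at hlo
  obtain ⟨m, hm⟩ : ∃ m, m = k.choose 2 - s + 2 := ⟨_, rfl⟩
  rw [← hm]
  -- basic numeric facts
  have hm2 : 2 ≤ m := by omega
  have h2m : 2 * m ≤ k - 2 := by omega
  have hmk1 : m ≤ k - 1 := by omega
  -- bfun k 2 m = m
  have h0 : (k - k / 2 * 2).choose 2 = 0 := Nat.choose_eq_zero_of_lt (by omega)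
  have hbm : bfun k 2 m = m := by
    rw [bfun, h0]
    have h22 : Nat.choose 2 2 = 1 := by decide
    rw [h22]
    omega
  -- the key lower bound
  have hlb : ∀ x ∈ {x : ℝ | ∃ p j : ℕ, 2 ≤ p ∧ p ≤ k - 1 ∧ 1 ≤ j ∧ j ≤ k - 1 ∧
      bfun k p j ≤ k.choose 2 - s + 2 ∧ x = Lfun k s p j}, Lfun k s 2 m ≤ x := by
    rintro x ⟨p, j, hp2, hpk1, hj1, hjk1, hb, rfl⟩
    have hjp : j * p.choose 2 ≤ m := by
      have h1 : min (j * p.choose 2)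
          ((k / p) * p.choose 2 + (k - (k / p) * p).choose 2) ≤ m := by
        rw [hm]; exact hb
      have h2 : k / 2 ≤ (k / p) * p.choose 2 + (k - (k / p) * p).choose 2 :=
        second_branch_ge k p hp2 (by omega)
      generalize hJ : j * p.choose 2 = J at h1
      generalize hB : (k / p) * p.choose 2 + (k - (k / p) * p).choose 2 = B at h1 h2
      omega
    have hkey : j * (p * (p - 1)) ≤ 2 * m := by
      have := two_mul_choose_two p
      calc j * (p * (p - 1)) = j * (2 * p.choose 2) := by rw [this]
        _ = 2 * (j * p.choose 2) := by ring
        _ ≤ 2 * m := by omega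
    -- cast to ℝ
    have hkeyR : (j : ℝ) * ((p : ℝ) * ((p : ℝ) - 1)) ≤ 2 * (m : ℝ) := by
      have h := hkey
      have hc : ((j * (p * (p - 1)) : ℕ) : ℝ) ≤ ((2 * m : ℕ) : ℝ) := by exact_mod_cast h
      push_cast [Nat.cast_sub (by omega : 1 ≤ p)] at hc
      convert hc using 2 <;> push_cast <;> ring
    have hjR : (1 : ℝ) ≤ (j : ℝ) := by exact_mod_cast hj1
    have hpR : (2 : ℝ) ≤ (p : ℝ) := by exact_mod_cast hp2
    have hmR : (2 : ℝ) ≤ (m : ℝ) := by exact_mod_cast hm2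
    have hkR : (4 : ℝ) ≤ (k : ℝ) := by exact_mod_cast hk
    have hA : 2 * (j : ℝ) * ((p : ℝ) - 1) ≤ (p : ℝ) * (m : ℝ) := by
      nlinarith [mul_nonneg (sub_nonneg.mpr hpR) (mul_nonneg (by linarith : (0:ℝ) ≤ (j:ℝ)) (by linarith : (0:ℝ) ≤ (p:ℝ) - 1)),
        mul_nonneg (sub_nonneg.mpr hpR) (by linarith : (0:ℝ) ≤ (m:ℝ))]
    have hprod : (0:ℝ) ≤ ((k:ℝ) - 1) * (2 * (p:ℝ) * (m:ℝ) - 4 * (j:ℝ) * ((p:ℝ) - 1)) :=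
      mul_nonneg (by linarith) (by linarith)
    have hd2 : (0 : ℝ) < (j : ℝ) * ((p : ℝ) - 1) := by nlinarith
    have hgoal : 2 * (2:ℕ) * ((k:ℝ) - 1) / ((m:ℝ) * ((2:ℕ) - 1)) ≤
        2 * (p:ℝ) * ((k:ℝ) - 1) / ((j:ℝ) * ((p:ℝ) - 1)) := by
      rw [div_le_div_iff₀ (by push_cast; linarith) hd2]
      push_cast
      nlinarith [hprod]
    rw [Lfun, Lfun]
    exact add_le_add_right hgoal 1
  have hmem : Lfun k s 2 m ∈ {x : ℝ | ∃ p j : ℕ, 2 ≤ p ∧ p ≤ k - 1 ∧ 1 ≤ j ∧ j ≤ k - 1 ∧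
      bfun k p j ≤ k.choose 2 - s + 2 ∧ x = Lfun k s p j} :=
    ⟨2, m, le_refl 2, by omega, by omega, hmk1, by rw [hbm]; omega, rfl⟩
  have heq : Lopt k s = Lfun k s 2 m := by
    rw [Lopt]
    exact le_antisymm (csInf_le ⟨Lfun k s 2 m, fun x hx => hlb x hx⟩ hmem)
      (le_csInf ⟨_, hmem⟩ hlb)
  have hmcR : (m : ℝ) = (k.choose 2 : ℝ) - (s : ℝ) + 2 := by
    have : m + s = k.choose 2 + 2 := by omega
    have := congrArg (fun n : ℕ => (n : ℝ)) this
    push_cast at this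
    linarith
  have hLval : Lfun k s 2 m = 1 + 4 * ((k : ℝ) - 1) / ((k.choose 2 : ℝ) - (s : ℝ) + 2) := by
    rw [Lfun, ← hmcR]
    push_cast
    rw [mul_sub, mul_one]
    norm_num
    ring
  refine ⟨⟨by omega, hmk1, by rw [hbm]⟩, heq, by rw [heq, hLval], ?_⟩
  rw [heq, Lfun]
  have hmR : (2 : ℝ) ≤ (m : ℝ) := by exact_mod_cast hm2
  have h2mR : 2 * (m : ℝ) ≤ (k : ℝ) - 2 := by
    have : (2 * m : ℕ) ≤ k - 2 := h2m
    have hc : ((2 * m : ℕ) : ℝ) ≤ ((k - 2 : ℕ) : ℝ) := by exact_mod_cast this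
    push_cast [Nat.cast_sub (by omega : 2 ≤ k)] at hc
    linarith
  have hd : (0 : ℝ) < (m : ℝ) * (((2:ℕ) : ℝ) - 1) := by push_cast; linarith
  have h8 : (8 : ℝ) < 2 * ((2:ℕ) : ℝ) * ((k : ℝ) - 1) / ((m : ℝ) * (((2:ℕ) : ℝ) - 1)) := by
    rw [lt_div_iff₀ hd]
    push_cast
    nlinarith
  linarith [h8]

end ERExt
end

section
/- Let n, r, k ≥ 2 and 2 ≤ s ≤ C(k,2) be integers. If there exists an (r,P_{k,s})-extremal graph on n vertices that is not complete multipartite, then there exist at least two non-isomorphic (r,P_{k,s})-extremal complete multipartite graphs on n vertices. -/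
open SimpleGraph Finset

namespace ERExt

section Aux

variable {n r k s : ℕ}

/-- colors of a total coloring `d` on the edges of `H` inside `t` -/
def colSet (H : SimpleGraph (Fin n)) (t : Finset (Fin n)) (d : Sym2 (Fin n) → Fin r) :
    Set (Fin r) :=
  {col | ∃ e, e ∈ H.edgeSet ∧ (∀ w ∈ e, w ∈ t) ∧ d e = col}

lemma colSet_congr {H : SimpleGraph (Fin n)} {t : Finset (Fin n)}
    {d d' : Sym2 (Fin n) → Fin r}
    (h : ∀ e, e ∈ H.edgeSet → (∀ w ∈ e, w ∈ t) → d e = d' e) :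
    colSet H t d = colSet H t d' := by
  ext col
  constructor
  · rintro ⟨e, he, hin, rfl⟩; exact ⟨e, he, hin, (h e he hin).symm⟩
  · rintro ⟨e, he, hin, rfl⟩; exact ⟨e, he, hin, h e he hin⟩

/-- `P_{k,s}`-freeness for total colorings with default value `z` off the edge set. -/
def TotFree (H : SimpleGraph (Fin n)) (k s : ℕ) (z : Fin r) (d : Sym2 (Fin n) → Fin r) :
    Prop :=
  (∀ e, e ∉ H.edgeSet → d e = z) ∧ ∀ t, H.IsNClique k t → (colSet H t d).ncard < s

lemma pkset_eq_colSet (H : SimpleGraph (Fin n)) (t : Finset (Fin n))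
    (d : Sym2 (Fin n) → Fin r) :
    {col : Fin r | ∃ e : H.edgeSet, (∀ w ∈ (e : Sym2 (Fin n)), w ∈ t) ∧ d e = col}
      = colSet H t d := by
  ext col
  constructor
  · rintro ⟨⟨e, he⟩, hin, h⟩; exact ⟨e, he, hin, h⟩
  · rintro ⟨e, he, hin, h⟩; exact ⟨⟨e, he⟩, hin, h⟩

lemma numPkFree_eq_card_totFree (H : SimpleGraph (Fin n)) (z : Fin r) :
    numPkFree H r k s = Nat.card {d : Sym2 (Fin n) → Fin r // TotFree H k s z d} := by
  classical
  rw [numPkFree]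
  refine (Nat.card_congr ?_).symm
  refine
    { toFun := fun d => ⟨fun e => d.1 e, ?_⟩
      invFun := fun c => ⟨fun e => if h : e ∈ H.edgeSet then c.1 ⟨e, h⟩ else z, ?_, ?_⟩
      left_inv := ?_
      right_inv := ?_ }
  · intro t ht
    rw [pkset_eq_colSet]
    exact d.2.2 t ht
  · intro e he; simp [he]
  · intro t ht
    have := c.2 t ht
    have hset : {col : Fin r | ∃ e : H.edgeSet, (∀ w ∈ (e : Sym2 (Fin n)), w ∈ t) ∧ c.1 e = col}
        = colSet H t (fun e => if h : e ∈ H.edgeSet then c.1 ⟨e, h⟩ else z) := by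
      ext col
      constructor
      · rintro ⟨⟨e, he⟩, hin, h⟩; exact ⟨e, he, hin, by simpa [he] using h⟩
      · rintro ⟨e, he, hin, h⟩; exact ⟨⟨e, he⟩, hin, by simpa [he] using h⟩
    rw [← hset]
    exact this
  · rintro ⟨d, hd⟩
    apply Subtype.ext
    funext e
    by_cases h : e ∈ H.edgeSet <;> simp [h]
    exact (hd.1 e h).symm
  · rintro ⟨c, hc⟩
    apply Subtype.ext
    funext e
    simp [e.2]

end Aux

section Decomp

variable {n r k s : ℕ}

/-- overlay: use `dp` on edges containing `x`, `dz` elsewhere. -/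
def ovl (x : Fin n) (dz dp : Sym2 (Fin n) → Fin r) : Sym2 (Fin n) → Fin r :=
  fun e => if x ∈ e then dp e else dz e

/-- Valid extension at the vertex `x` (partner vertex `y`), over the base coloring `dz`. -/
def okP (H : SimpleGraph (Fin n)) (k s : ℕ) (z : Fin r) (x y : Fin n)
    (dz dp : Sym2 (Fin n) → Fin r) : Prop :=
  (∀ e, ¬(x ∈ e ∧ y ∉ e ∧ e ∈ H.edgeSet) → dp e = z) ∧
  ∀ t, H.IsNClique k t → x ∈ t → (colSet H t (ovl x dz dp)).ncard < s

/-- Valid base coloring, on edges avoiding both `x` and `y`. -/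
def okZ (H : SimpleGraph (Fin n)) (k s : ℕ) (z : Fin r) (x y : Fin n)
    (dz : Sym2 (Fin n) → Fin r) : Prop :=
  (∀ e, ¬(x ∉ e ∧ y ∉ e ∧ e ∈ H.edgeSet) → dz e = z) ∧
  ∀ t, H.IsNClique k t → x ∉ t → y ∉ t → (colSet H t dz).ncard < s

lemma okZ_comm {H : SimpleGraph (Fin n)} {z : Fin r} {x y : Fin n}
    {dz : Sym2 (Fin n) → Fin r} :
    okZ H k s z x y dz ↔ okZ H k s z y x dz := by
  unfold okZ
  constructor <;> rintro ⟨h1, h2⟩ <;>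
    exact ⟨fun e he => h1 e (fun ⟨a, b, c⟩ => he ⟨b, a, c⟩), fun t ht hx hy => h2 t ht hy hx⟩

lemma not_mem_clique_of_nadj {H : SimpleGraph (Fin n)} {u v : Fin n} (hne : u ≠ v)
    (huv : ¬H.Adj u v) {t : Finset (Fin n)} (ht : H.IsNClique k t) (hu : u ∈ t) : v ∉ t :=
  fun hv => huv (ht.1 (Finset.mem_coe.mpr hu) (Finset.mem_coe.mpr hv) hne)

lemma card_plift_mul_self (p : Prop) :
    Nat.card (PLift p) * Nat.card (PLift p) = Nat.card (PLift p) := by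
  by_cases h : p
  · letI : Unique (PLift p) := ⟨⟨⟨h⟩⟩, by rintro ⟨x⟩; rfl⟩
    simp [Nat.card_unique]
  · letI : IsEmpty (PLift p) := ⟨fun x => h x.down⟩
    simp [Nat.card_of_isEmpty]

lemma card_triple {γ α β : Type*} [Fintype γ] [Finite α] [Finite β] (P : γ → Prop)
    (Q : γ → α → Prop) (R : γ → β → Prop) :
    Nat.card {p : γ × α × β // P p.1 ∧ Q p.1 p.2.1 ∧ R p.1 p.2.2}
      = ∑ c : γ, Nat.card (PLift (P c)) *
          (Nat.card {a // Q c a} * Nat.card {b // R c b}) := by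
  classical
  have e : {p : γ × α × β // P p.1 ∧ Q p.1 p.2.1 ∧ R p.1 p.2.2}
      ≃ Σ c : γ, PLift (P c) × {a // Q c a} × {b // R c b} :=
    { toFun := fun p => ⟨p.1.1, ⟨p.2.1⟩, ⟨p.1.2.1, p.2.2.1⟩, ⟨p.1.2.2, p.2.2.2⟩⟩
      invFun := fun x => ⟨⟨x.1, x.2.2.1.1, x.2.2.2.1⟩, x.2.1.down, x.2.2.1.2, x.2.2.2.2⟩
      left_inv := by rintro ⟨⟨c, a, b⟩, h⟩; rfl
      right_inv := by rintro ⟨c, ⟨hp⟩, ⟨a, ha⟩, ⟨b, hb⟩⟩; rfl }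
  rw [Nat.card_congr e]
  letI : ∀ c : γ, Fintype (PLift (P c) × {a // Q c a} × {b // R c b}) := fun c =>
    Fintype.ofFinite _
  rw [Nat.card_eq_fintype_card, Fintype.card_sigma]
  refine Finset.sum_congr rfl fun c _ => ?_
  rw [← Nat.card_eq_fintype_card, Nat.card_prod, Nat.card_prod]

/-- The key decomposition of the number of `P_{k,s}`-free colorings of `H` according to the
base coloring off `u, v`, and the extensions at `u` and at `v`. -/
lemma decomp (H : SimpleGraph (Fin n)) (z : Fin r) (u v : Fin n)
    (hne : u ≠ v) (huv : ¬H.Adj u v) :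
    numPkFree H r k s = ∑ dz : Sym2 (Fin n) → Fin r,
      Nat.card (PLift (okZ H k s z u v dz)) *
        (Nat.card {da : Sym2 (Fin n) → Fin r // okP H k s z u v dz da} *
         Nat.card {db : Sym2 (Fin n) → Fin r // okP H k s z v u dz db}) := by
  classical
  rw [numPkFree_eq_card_totFree H z,
    ← card_triple (okZ H k s z u v) (okP H k s z u v) (okP H k s z v u)]
  refine Nat.card_congr ?_
  have hsuv : s(u, v) ∉ H.edgeSet := fun h => huv (H.mem_edgeSet.mp h)
  refine
    { toFun := fun d =>
        ⟨(fun e => if u ∉ e ∧ v ∉ e ∧ e ∈ H.edgeSet then d.1 e else z,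
          fun e => if u ∈ e ∧ v ∉ e ∧ e ∈ H.edgeSet then d.1 e else z,
          fun e => if v ∈ e ∧ u ∉ e ∧ e ∈ H.edgeSet then d.1 e else z), ?_, ?_, ?_⟩
      invFun := fun p =>
        ⟨fun e => if u ∈ e then p.1.2.1 e else if v ∈ e then p.1.2.2 e else p.1.1 e,
          ?_, ?_⟩
      left_inv := ?_
      right_inv := ?_ }
  · -- okZ of the masked base
    obtain ⟨d, hd⟩ := d
    constructor
    · intro e he; simp only [if_neg he]
    · intro t ht hut hvt
      have : colSet H t (fun e => if u ∉ e ∧ v ∉ e ∧ e ∈ H.edgeSet then d e else z)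
          = colSet H t d := by
        apply colSet_congr
        intro e he hin
        try dsimp only
        rw [if_pos ⟨fun h => hut (hin u h), fun h => hvt (hin v h), he⟩]
      rw [this]; exact hd.2 t ht
  · -- okP at u
    obtain ⟨d, hd⟩ := d
    constructor
    · intro e he; simp only [if_neg he]
    · intro t ht hut
      have hvt : v ∉ t := not_mem_clique_of_nadj hne huv ht hut
      have : colSet H t (ovl u (fun e => if u ∉ e ∧ v ∉ e ∧ e ∈ H.edgeSet then d e else z)
          (fun e => if u ∈ e ∧ v ∉ e ∧ e ∈ H.edgeSet then d e else z)) = colSet H t d := by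
        apply colSet_congr
        intro e he hin
        unfold ovl
        try dsimp only
        by_cases hu : u ∈ e
        · rw [if_pos hu, if_pos ⟨hu, fun h => hvt (hin v h), he⟩]
        · rw [if_neg hu, if_pos ⟨hu, fun h => hvt (hin v h), he⟩]
      rw [this]; exact hd.2 t ht
  · -- okP at v
    obtain ⟨d, hd⟩ := d
    constructor
    · intro e he; simp only [if_neg he]
    · intro t ht hvt
      have hut : u ∉ t := not_mem_clique_of_nadj hne.symm (fun h => huv h.symm) ht hvt
      have : colSet H t (ovl v (fun e => if u ∉ e ∧ v ∉ e ∧ e ∈ H.edgeSet then d e else z)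
          (fun e => if v ∈ e ∧ u ∉ e ∧ e ∈ H.edgeSet then d e else z)) = colSet H t d := by
        apply colSet_congr
        intro e he hin
        unfold ovl
        try dsimp only
        by_cases hv : v ∈ e
        · rw [if_pos hv, if_pos ⟨hv, fun h => hut (hin u h), he⟩]
        · rw [if_neg hv, if_pos ⟨fun h => hut (hin u h), hv, he⟩]
      rw [this]; exact hd.2 t ht
  · -- TotFree of the glued coloring : support
    obtain ⟨⟨dz, da, db⟩, hz, ha, hb⟩ := p
    intro e he
    by_cases hu : u ∈ e
    · simp only [if_pos hu]; exact ha.1 e (fun h => he h.2.2)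
    · by_cases hv : v ∈ e
      · simp only [if_neg hu, if_pos hv]; exact hb.1 e (fun h => he h.2.2)
      · simp only [if_neg hu, if_neg hv]; exact hz.1 e (fun h => he h.2.2)
  · -- TotFree of the glued coloring : cliques
    obtain ⟨⟨dz, da, db⟩, hz, ha, hb⟩ := p
    intro t ht
    by_cases hut : u ∈ t
    · have hvt : v ∉ t := not_mem_clique_of_nadj hne huv ht hut
      have : colSet H t (fun e => if u ∈ e then da e else if v ∈ e then db e else dz e)
          = colSet H t (ovl u dz da) := by
        apply colSet_congr
        intro e he hin
        unfold ovl
        try dsimp only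
        by_cases hu : u ∈ e
        · simp only [if_pos hu]
        · simp only [if_neg hu, if_neg (fun h => hvt (hin v h) : ¬ v ∈ e)]
      rw [this]; exact ha.2 t ht hut
    · by_cases hvt : v ∈ t
      · have : colSet H t (fun e => if u ∈ e then da e else if v ∈ e then db e else dz e)
            = colSet H t (ovl v dz db) := by
          apply colSet_congr
          intro e he hin
          unfold ovl
          simp only [if_neg (fun h => hut (hin u h) : ¬ u ∈ e)]
        rw [this]; exact hb.2 t ht hvt
      · have : colSet H t (fun e => if u ∈ e then da e else if v ∈ e then db e else dz e)
            = colSet H t dz := by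
          apply colSet_congr
          intro e he hin
          simp only [if_neg (fun h => hut (hin u h) : ¬ u ∈ e),
            if_neg (fun h => hvt (hin v h) : ¬ v ∈ e)]
        rw [this]; exact hz.2 t ht hut hvt
  · -- left inverse
    rintro ⟨d, hd⟩
    apply Subtype.ext
    funext e
    by_cases hu : u ∈ e
    · simp only [if_pos hu]
      try dsimp only
      by_cases hv : v ∈ e
      · have he : e = s(u, v) := (Sym2.mem_and_mem_iff hne).mp ⟨hu, hv⟩
        rw [if_neg (by rw [he]; rintro ⟨-, h, -⟩; exact h (Sym2.mem_mk_right u v))]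
        exact (hd.1 e (by rw [he]; exact hsuv)).symm
      · by_cases he : e ∈ H.edgeSet
        · rw [if_pos ⟨hu, hv, he⟩]
        · rw [if_neg (by rintro ⟨-, -, h⟩; exact he h)]; exact (hd.1 e he).symm
    · by_cases hv : v ∈ e
      · simp only [if_neg hu, if_pos hv]
        try dsimp only
        by_cases he : e ∈ H.edgeSet
        · rw [if_pos ⟨hv, hu, he⟩]
        · rw [if_neg (by rintro ⟨-, -, h⟩; exact he h)]; exact (hd.1 e he).symm
      · simp only [if_neg hu, if_neg hv]
        try dsimp only
        by_cases he : e ∈ H.edgeSet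
        · rw [if_pos ⟨hu, hv, he⟩]
        · rw [if_neg (by rintro ⟨-, -, h⟩; exact he h)]; exact (hd.1 e he).symm
  · -- right inverse
    rintro ⟨⟨dz, da, db⟩, hz, ha, hb⟩
    apply Subtype.ext
    refine Prod.ext ?_ (Prod.ext ?_ ?_) <;> funext e <;> dsimp only
    · by_cases hc : u ∉ e ∧ v ∉ e ∧ e ∈ H.edgeSet
      · rw [if_pos hc, if_neg hc.1, if_neg hc.2.1]
      · rw [if_neg hc]; exact (hz.1 e hc).symm
    · by_cases hc : u ∈ e ∧ v ∉ e ∧ e ∈ H.edgeSet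
      · rw [if_pos hc, if_pos hc.1]
      · rw [if_neg hc]; exact (ha.1 e hc).symm
    · by_cases hc : v ∈ e ∧ u ∉ e ∧ e ∈ H.edgeSet
      · rw [if_pos hc, if_neg hc.2.1, if_pos hc.1]
      · rw [if_neg hc]; exact (hb.1 e hc).symm

end Decomp
section Transfer

variable {n r k s : ℕ}

/-- The involution on edges induced by swapping `a` and `b`. -/
def swapEdge (a b : Fin n) : Sym2 (Fin n) → Sym2 (Fin n) :=
  Sym2.map ⇑(Equiv.swap a b)

lemma swapEdge_invol (a b : Fin n) (e : Sym2 (Fin n)) :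
    swapEdge a b (swapEdge a b e) = e := by
  induction e using Sym2.inductionOn with
  | hf p q =>
    unfold swapEdge
    rw [Sym2.map_pair_eq, Sym2.map_pair_eq, Equiv.swap_apply_self, Equiv.swap_apply_self]

lemma mem_swapEdge (a b x : Fin n) (e : Sym2 (Fin n)) :
    x ∈ swapEdge a b e ↔ Equiv.swap a b x ∈ e := by
  induction e using Sym2.inductionOn with
  | hf p q =>
    unfold swapEdge
    rw [Sym2.map_pair_eq, Sym2.mem_iff, Sym2.mem_iff]
    constructor
    · rintro (rfl | rfl)
      · left; rw [Equiv.swap_apply_self]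
      · right; rw [Equiv.swap_apply_self]
    · rintro (h | h)
      · left; rw [← h, Equiv.swap_apply_self]
      · right; rw [← h, Equiv.swap_apply_self]

lemma swapEdge_fix {a b : Fin n} {e : Sym2 (Fin n)} (ha : a ∉ e) (hb : b ∉ e) :
    swapEdge a b e = e := by
  induction e using Sym2.inductionOn with
  | hf p q =>
    rw [Sym2.mem_iff] at ha hb
    push_neg at ha hb
    unfold swapEdge
    rw [Sym2.map_pair_eq, Equiv.swap_apply_of_ne_of_ne (Ne.symm ha.1) (Ne.symm hb.1),
      Equiv.swap_apply_of_ne_of_ne (Ne.symm ha.2) (Ne.symm hb.2)]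

lemma edge_replace_not_mem (G : SimpleGraph (Fin n)) (a b : Fin n) (e : Sym2 (Fin n))
    (hb : b ∉ e) : e ∈ (G.replaceVertex a b).edgeSet ↔ e ∈ G.edgeSet := by
  induction e using Sym2.inductionOn with
  | hf x y =>
    rw [Sym2.mem_iff] at hb
    push_neg at hb
    rw [SimpleGraph.mem_edgeSet, SimpleGraph.mem_edgeSet,
      G.adj_replaceVertex_iff_of_ne a (Ne.symm hb.1) (Ne.symm hb.2)]

lemma swapEdge_edge (G : SimpleGraph (Fin n)) {a b : Fin n} (e : Sym2 (Fin n))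
    (hae : a ∈ e) (hbe : b ∉ e) :
    swapEdge a b e ∈ (G.replaceVertex a b).edgeSet ↔ e ∈ G.edgeSet := by
  induction e using Sym2.inductionOn with
  | hf p q =>
    rw [Sym2.mem_iff] at hae
    rw [Sym2.mem_iff] at hbe
    push_neg at hbe
    obtain ⟨hb1, hb2⟩ := hbe
    unfold swapEdge
    rcases hae with rfl | rfl
    · rw [Sym2.map_pair_eq, Equiv.swap_apply_left]
      by_cases hq : q = a
      · subst hq
        rw [Equiv.swap_apply_left]
        simp [SimpleGraph.mem_edgeSet]
      · rw [Equiv.swap_apply_of_ne_of_ne hq (Ne.symm hb2),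
          SimpleGraph.mem_edgeSet, SimpleGraph.mem_edgeSet]
        exact G.adj_replaceVertex_iff_of_ne_right a (Ne.symm hb2)
    · rw [Sym2.map_pair_eq, Equiv.swap_apply_left]
      by_cases hp : p = a
      · subst hp
        rw [Equiv.swap_apply_left]
        simp [SimpleGraph.mem_edgeSet]
      · rw [Equiv.swap_apply_of_ne_of_ne hp (Ne.symm hb1),
          SimpleGraph.mem_edgeSet, SimpleGraph.mem_edgeSet,
          SimpleGraph.adj_comm, G.adj_comm]
        exact G.adj_replaceVertex_iff_of_ne_right a (Ne.symm hb1)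

lemma clique_replace {G : SimpleGraph (Fin n)} {a b : Fin n} {t : Finset (Fin n)}
    (hbt : b ∉ t) : (G.replaceVertex a b).IsNClique k t ↔ G.IsNClique k t := by
  constructor <;> rintro ⟨hc, hcard⟩ <;> refine ⟨fun x hx y hy hxy => ?_, hcard⟩ <;>
    have hxb : x ≠ b := fun h => hbt (h ▸ Finset.mem_coe.mp hx) <;>
    have hyb : y ≠ b := fun h => hbt (h ▸ Finset.mem_coe.mp hy)
  · exact (G.adj_replaceVertex_iff_of_ne a hxb hyb).mp (hc hx hy hxy)
  · exact (G.adj_replaceVertex_iff_of_ne a hxb hyb).mpr (hc hx hy hxy)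

lemma colSet_replace {G : SimpleGraph (Fin n)} {a b : Fin n} {t : Finset (Fin n)}
    (hbt : b ∉ t) (d : Sym2 (Fin n) → Fin r) :
    colSet (G.replaceVertex a b) t d = colSet G t d := by
  ext col
  constructor <;> rintro ⟨e, he, hin, rfl⟩ <;> refine ⟨e, ?_, hin, rfl⟩
  · exact (edge_replace_not_mem G a b e (fun h => hbt (hin b h))).mp he
  · exact (edge_replace_not_mem G a b e (fun h => hbt (hin b h))).mpr he

lemma okZ_replace {G : SimpleGraph (Fin n)} {z : Fin r} {a b : Fin n}
    (dz : Sym2 (Fin n) → Fin r) :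
    okZ (G.replaceVertex a b) k s z a b dz ↔ okZ G k s z a b dz := by
  unfold okZ
  constructor <;> rintro ⟨h1, h2⟩ <;> refine ⟨fun e hc => h1 e ?_, fun t ht hat hbt => ?_⟩
  · rintro ⟨x1, x2, x3⟩
    exact hc ⟨x1, x2, (edge_replace_not_mem G a b e x2).mp x3⟩
  · have := h2 t ((clique_replace hbt).mpr ht) hat hbt
    rwa [colSet_replace hbt] at this
  · rintro ⟨x1, x2, x3⟩
    exact hc ⟨x1, x2, (edge_replace_not_mem G a b e x2).mpr x3⟩
  · rw [colSet_replace hbt]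
    exact h2 t ((clique_replace hbt).mp ht) hat hbt

lemma okP_replace_keep {G : SimpleGraph (Fin n)} {z : Fin r} {a b : Fin n}
    (hab : a ≠ b) (hnadj : ¬G.Adj a b) (dz dp : Sym2 (Fin n) → Fin r) :
    okP (G.replaceVertex a b) k s z a b dz dp ↔ okP G k s z a b dz dp := by
  have hnadj' : ¬(G.replaceVertex a b).Adj a b := G.not_adj_replaceVertex_same a b
  unfold okP
  constructor <;> rintro ⟨h1, h2⟩ <;> refine ⟨fun e hc => h1 e ?_, fun t ht hat => ?_⟩
  · rintro ⟨x1, x2, x3⟩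
    exact hc ⟨x1, x2, (edge_replace_not_mem G a b e x2).mp x3⟩
  · have hbt : b ∉ t := not_mem_clique_of_nadj hab hnadj ht hat
    have := h2 t ((clique_replace hbt).mpr ht) hat
    rwa [colSet_replace hbt] at this
  · rintro ⟨x1, x2, x3⟩
    exact hc ⟨x1, x2, (edge_replace_not_mem G a b e x2).mpr x3⟩
  · have hbt : b ∉ t := not_mem_clique_of_nadj hab hnadj' ht hat
    rw [colSet_replace hbt]
    exact h2 t ((clique_replace hbt).mp ht) hat

end Transfer
section Swap

variable {n r k s : ℕ}

lemma mem_image_swap {a b : Fin n} {t : Finset (Fin n)} (hbt : b ∉ t) :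
    a ∉ t.image ⇑(Equiv.swap a b) := by
  intro h
  obtain ⟨x, hx, hxe⟩ := Finset.mem_image.mp h
  have : x = b := by
    have := congrArg (⇑(Equiv.swap a b)) hxe
    rwa [Equiv.swap_apply_self, Equiv.swap_apply_left] at this
  exact hbt (this ▸ hx)

lemma image_swap_image_swap {a b : Fin n} (t : Finset (Fin n)) :
    (t.image ⇑(Equiv.swap a b)).image ⇑(Equiv.swap a b) = t := by
  rw [Finset.image_image]
  have : (⇑(Equiv.swap a b)) ∘ (⇑(Equiv.swap a b)) = id :=
    funext fun x => Equiv.swap_apply_self a b x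
  rw [this, Finset.image_id]

lemma clique_swap_to {G : SimpleGraph (Fin n)} {a b : Fin n} {t : Finset (Fin n)}
    (ht : G.IsNClique k t) (hbt : b ∉ t) :
    (G.replaceVertex a b).IsNClique k (t.image ⇑(Equiv.swap a b)) := by
  obtain ⟨hc, hcard⟩ := ht
  constructor
  · rintro x hx y hy hxy
    simp only [Finset.coe_image, Set.mem_image, Finset.mem_coe] at hx hy
    obtain ⟨x', hx', rfl⟩ := hx
    obtain ⟨y', hy', rfl⟩ := hy
    have hxy' : x' ≠ y' := fun h => hxy (by rw [h])
    have hadj := hc (Finset.mem_coe.mpr hx') (Finset.mem_coe.mpr hy') hxy'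
    have hxb : x' ≠ b := fun h => hbt (h ▸ hx')
    have hyb : y' ≠ b := fun h => hbt (h ▸ hy')
    rcases eq_or_ne x' a with rfl | hxa
    · rw [Equiv.swap_apply_left, Equiv.swap_apply_of_ne_of_ne (Ne.symm hxy') hyb]
      exact (G.adj_replaceVertex_iff_of_ne_right x' hyb).mpr hadj
    · rcases eq_or_ne y' a with rfl | hya
      · rw [Equiv.swap_apply_left, Equiv.swap_apply_of_ne_of_ne hxa hxb]
        exact ((G.adj_replaceVertex_iff_of_ne_right y' hxb).mpr hadj.symm).symm
      · rw [Equiv.swap_apply_of_ne_of_ne hxa hxb, Equiv.swap_apply_of_ne_of_ne hya hyb]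
        exact (G.adj_replaceVertex_iff_of_ne a hxb hyb).mpr hadj
  · rw [Finset.card_image_of_injective _ (Equiv.injective _), hcard]

lemma clique_swap_from {G : SimpleGraph (Fin n)} {a b : Fin n} {t : Finset (Fin n)}
    (ht : (G.replaceVertex a b).IsNClique k t) (hat : a ∉ t) :
    G.IsNClique k (t.image ⇑(Equiv.swap a b)) := by
  obtain ⟨hc, hcard⟩ := ht
  constructor
  · rintro x hx y hy hxy
    simp only [Finset.coe_image, Set.mem_image, Finset.mem_coe] at hx hy
    obtain ⟨x', hx', rfl⟩ := hx
    obtain ⟨y', hy', rfl⟩ := hy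
    have hxy' : x' ≠ y' := fun h => hxy (by rw [h])
    have hadj := hc (Finset.mem_coe.mpr hx') (Finset.mem_coe.mpr hy') hxy'
    have hxa : x' ≠ a := fun h => hat (h ▸ hx')
    have hya : y' ≠ a := fun h => hat (h ▸ hy')
    rcases eq_or_ne x' b with hxb' | hxb
    · have hyb : y' ≠ b := fun h => hxy' (by rw [hxb', h])
      rw [hxb', Equiv.swap_apply_right, Equiv.swap_apply_of_ne_of_ne hya hyb]
      rw [hxb'] at hadj
      exact (G.adj_replaceVertex_iff_of_ne_right a hyb).mp hadj
    · rcases eq_or_ne y' b with hyb' | hyb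
      · rw [hyb', Equiv.swap_apply_right, Equiv.swap_apply_of_ne_of_ne hxa hxb]
        rw [hyb'] at hadj
        exact ((G.adj_replaceVertex_iff_of_ne_right a hxb).mp hadj.symm).symm
      · rw [Equiv.swap_apply_of_ne_of_ne hxa hxb, Equiv.swap_apply_of_ne_of_ne hya hyb]
        exact (G.adj_replaceVertex_iff_of_ne a hxb hyb).mp hadj
  · rw [Finset.card_image_of_injective _ (Equiv.injective _), hcard]

lemma colSet_swap {G : SimpleGraph (Fin n)} {a b : Fin n} {t' : Finset (Fin n)}
    (hbt : b ∉ t') (dz dp : Sym2 (Fin n) → Fin r) :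
    colSet (G.replaceVertex a b) (t'.image ⇑(Equiv.swap a b)) (ovl b dz dp)
      = colSet G t' (ovl a dz (fun e => dp (swapEdge a b e))) := by
  have hanotim : a ∉ t'.image ⇑(Equiv.swap a b) := mem_image_swap hbt
  ext col
  constructor
  · rintro ⟨f, hfE, hfin, rfl⟩
    have haf : a ∉ f := fun h => hanotim (hfin a h)
    refine ⟨swapEdge a b f, ?_, ?_, ?_⟩
    · by_cases hbf : b ∈ f
      · have h4 := swapEdge_edge G (swapEdge a b f)
          (by rw [mem_swapEdge, Equiv.swap_apply_left]; exact hbf)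
          (by rw [mem_swapEdge, Equiv.swap_apply_right]; exact haf)
        rw [swapEdge_invol] at h4
        exact h4.mp hfE
      · rw [swapEdge_fix haf hbf]
        exact (edge_replace_not_mem G a b f hbf).mp hfE
    · intro w hw
      rw [mem_swapEdge] at hw
      have := hfin _ hw
      obtain ⟨x, hx, hxe⟩ := Finset.mem_image.mp this
      have : x = w := by
        have := congrArg (⇑(Equiv.swap a b)) hxe
        rwa [Equiv.swap_apply_self, Equiv.swap_apply_self] at this
      exact this ▸ hx
    · unfold ovl
      by_cases hbf : b ∈ f
      · rw [if_pos hbf, if_pos (by rw [mem_swapEdge, Equiv.swap_apply_left]; exact hbf)]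
        show dp (swapEdge a b (swapEdge a b f)) = dp f
        rw [swapEdge_invol]
      · rw [if_neg hbf,
          if_neg (by rw [mem_swapEdge, Equiv.swap_apply_left]; exact hbf),
          swapEdge_fix haf hbf]
  · rintro ⟨e, heE, hin, rfl⟩
    have hbe : b ∉ e := fun h => hbt (hin b h)
    refine ⟨swapEdge a b e, ?_, ?_, ?_⟩
    · by_cases hae : a ∈ e
      · exact (swapEdge_edge G e hae hbe).mpr heE
      · rw [swapEdge_fix hae hbe]
        exact (edge_replace_not_mem G a b e hbe).mpr heE
    · intro w hw
      rw [mem_swapEdge] at hw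
      exact Finset.mem_image.mpr ⟨_, hin _ hw, Equiv.swap_apply_self a b w⟩
    · unfold ovl
      by_cases hae : a ∈ e
      · rw [if_pos (by rw [mem_swapEdge, Equiv.swap_apply_right]; exact hae), if_pos hae]
      · rw [if_neg hae,
          if_neg (by rw [mem_swapEdge, Equiv.swap_apply_right]; exact hae),
          swapEdge_fix hae hbe]

lemma card_okP_swap {G : SimpleGraph (Fin n)} {z : Fin r} {a b : Fin n}
    (hab : a ≠ b) (hnadj : ¬G.Adj a b) (dz : Sym2 (Fin n) → Fin r) :
    Nat.card {dp : Sym2 (Fin n) → Fin r // okP (G.replaceVertex a b) k s z b a dz dp}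
      = Nat.card {dp : Sym2 (Fin n) → Fin r // okP G k s z a b dz dp} := by
  have hnadj' : ¬(G.replaceVertex a b).Adj a b := G.not_adj_replaceVertex_same a b
  have hnadj'' : ¬(G.replaceVertex a b).Adj b a := fun h => hnadj' h.symm
  refine Nat.card_congr ?_
  refine
    { toFun := fun p => ⟨fun e => p.1 (swapEdge a b e), ?_, ?_⟩
      invFun := fun q => ⟨fun e => q.1 (swapEdge a b e), ?_, ?_⟩
      left_inv := ?_
      right_inv := ?_ }
  · -- support
    intro e hc
    apply p.2.1 (swapEdge a b e)
    rintro ⟨h1, h2, h3⟩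
    rw [mem_swapEdge, Equiv.swap_apply_right] at h1
    rw [mem_swapEdge, Equiv.swap_apply_left] at h2
    exact hc ⟨h1, h2, (swapEdge_edge G e h1 h2).mp h3⟩
  · -- cliques
    intro t' ht' hat'
    have hbt' : b ∉ t' := not_mem_clique_of_nadj hab hnadj ht' hat'
    rw [← colSet_swap hbt' dz p.1]
    exact p.2.2 (t'.image ⇑(Equiv.swap a b)) (clique_swap_to ht' hbt')
      (Finset.mem_image.mpr ⟨a, hat', Equiv.swap_apply_left a b⟩)
  · -- support, backward
    intro e hc
    apply q.2.1 (swapEdge a b e)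
    rintro ⟨h1, h2, h3⟩
    rw [mem_swapEdge, Equiv.swap_apply_left] at h1
    rw [mem_swapEdge, Equiv.swap_apply_right] at h2
    have h4 := swapEdge_edge G (swapEdge a b e)
      (by rw [mem_swapEdge, Equiv.swap_apply_left]; exact h1)
      (by rw [mem_swapEdge, Equiv.swap_apply_right]; exact h2)
    rw [swapEdge_invol] at h4
    exact hc ⟨h1, h2, h4.mpr h3⟩
  · -- cliques, backward
    intro t ht hbt
    have hat : a ∉ t := not_mem_clique_of_nadj (Ne.symm hab) hnadj'' ht hbt
    have hat' : a ∈ t.image ⇑(Equiv.swap a b) :=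
      Finset.mem_image.mpr ⟨b, hbt, Equiv.swap_apply_right a b⟩
    have hbt' : b ∉ t.image ⇑(Equiv.swap a b) := by
      intro h
      obtain ⟨x, hx, hxe⟩ := Finset.mem_image.mp h
      have : x = a := by
        have := congrArg (⇑(Equiv.swap a b)) hxe
        rwa [Equiv.swap_apply_self, Equiv.swap_apply_right] at this
      exact hat (this ▸ hx)
    have hcs := colSet_swap (G := G) (a := a) (b := b) hbt' dz (fun e => q.1 (swapEdge a b e))
    rw [image_swap_image_swap] at hcs
    have hfix : (fun e => q.1 (swapEdge a b (swapEdge a b e))) = q.1 := by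
      funext e; rw [swapEdge_invol]
    rw [hfix] at hcs
    rw [hcs]
    exact q.2.2 (t.image ⇑(Equiv.swap a b)) (clique_swap_from ht hat) hat'
  · rintro ⟨p, hp⟩
    apply Subtype.ext
    funext e
    simp only [swapEdge_invol]
  · rintro ⟨q, hq⟩
    apply Subtype.ext
    funext e
    simp only [swapEdge_invol]

end Swap
section Core

variable {n r k s : ℕ}

/-- **Key inequality**: cloning either way does not decrease the number of colorings on
geometric average. -/
lemma clone_sq_le (G : SimpleGraph (Fin n)) (u v : Fin n) (hne : u ≠ v)
    (huv : ¬G.Adj u v) (z : Fin r) :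
    numPkFree G r k s ^ 2 ≤
      numPkFree (G.replaceVertex u v) r k s * numPkFree (G.replaceVertex v u) r k s := by
  classical
  set X : (Sym2 (Fin n) → Fin r) → ℕ :=
    fun dz => Nat.card {dp : Sym2 (Fin n) → Fin r // okP G k s z u v dz dp} with hX
  set Y : (Sym2 (Fin n) → Fin r) → ℕ :=
    fun dz => Nat.card {dp : Sym2 (Fin n) → Fin r // okP G k s z v u dz dp} with hY
  set χ : (Sym2 (Fin n) → Fin r) → ℕ :=
    fun dz => Nat.card (PLift (okZ G k s z u v dz)) with hχ
  have hvu : ¬G.Adj v u := fun h => huv h.symm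
  have hG : numPkFree G r k s = ∑ dz : Sym2 (Fin n) → Fin r, χ dz * (X dz * Y dz) :=
    decomp G z u v hne huv
  have hG1 : numPkFree (G.replaceVertex u v) r k s
      = ∑ dz : Sym2 (Fin n) → Fin r, χ dz * (X dz * X dz) := by
    rw [decomp (G.replaceVertex u v) z u v hne (G.not_adj_replaceVertex_same u v)]
    refine Finset.sum_congr rfl fun dz _ => ?_
    have h1 : okZ (G.replaceVertex u v) k s z u v dz ↔ okZ G k s z u v dz := okZ_replace dz
    have h2 : Nat.card {dp : Sym2 (Fin n) → Fin r //
        okP (G.replaceVertex u v) k s z u v dz dp} = X dz := by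
      rw [hX]
      simp only [okP_replace_keep hne huv]
    have h3 : Nat.card {dp : Sym2 (Fin n) → Fin r //
        okP (G.replaceVertex u v) k s z v u dz dp} = X dz :=
      card_okP_swap hne huv dz
    rw [h1, h2, h3]
  have hG2 : numPkFree (G.replaceVertex v u) r k s
      = ∑ dz : Sym2 (Fin n) → Fin r, χ dz * (Y dz * Y dz) := by
    rw [decomp (G.replaceVertex v u) z u v hne
      (fun h => (G.not_adj_replaceVertex_same v u) h.symm)]
    refine Finset.sum_congr rfl fun dz _ => ?_
    have h1 : okZ (G.replaceVertex v u) k s z u v dz ↔ okZ G k s z u v dz :=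
      okZ_comm.trans ((okZ_replace dz).trans okZ_comm)
    have h2 : Nat.card {dp : Sym2 (Fin n) → Fin r //
        okP (G.replaceVertex v u) k s z u v dz dp} = Y dz :=
      card_okP_swap hne.symm hvu dz
    have h3 : Nat.card {dp : Sym2 (Fin n) → Fin r //
        okP (G.replaceVertex v u) k s z v u dz dp} = Y dz := by
      rw [hY]
      simp only [okP_replace_keep hne.symm hvu]
    rw [h1, h2, h3]
  rw [hG, hG1, hG2]
  have key := Finset.sum_mul_sq_le_sq_mul_sq Finset.univ
    (fun dz => χ dz * X dz) (fun dz => χ dz * Y dz)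
  have hsq : ∀ p : Prop, Nat.card (PLift p) * Nat.card (PLift p) = Nat.card (PLift p) :=
    card_plift_mul_self
  have e1 : (∑ dz : Sym2 (Fin n) → Fin r, χ dz * (X dz * Y dz))
      = ∑ dz : Sym2 (Fin n) → Fin r, (χ dz * X dz) * (χ dz * Y dz) := by
    refine Finset.sum_congr rfl fun dz _ => ?_
    calc χ dz * (X dz * Y dz) = (χ dz * χ dz) * (X dz * Y dz) := by rw [hχ]; rw [hsq]
    _ = (χ dz * X dz) * (χ dz * Y dz) := by ring
  have e2 : (∑ dz : Sym2 (Fin n) → Fin r, χ dz * (X dz * X dz))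
      = ∑ dz : Sym2 (Fin n) → Fin r, (χ dz * X dz) ^ 2 := by
    refine Finset.sum_congr rfl fun dz _ => ?_
    calc χ dz * (X dz * X dz) = (χ dz * χ dz) * (X dz * X dz) := by rw [hχ]; rw [hsq]
    _ = (χ dz * X dz) ^ 2 := by ring
  have e3 : (∑ dz : Sym2 (Fin n) → Fin r, χ dz * (Y dz * Y dz))
      = ∑ dz : Sym2 (Fin n) → Fin r, (χ dz * Y dz) ^ 2 := by
    refine Finset.sum_congr rfl fun dz _ => ?_
    calc χ dz * (Y dz * Y dz) = (χ dz * χ dz) * (Y dz * Y dz) := by rw [hχ]; rw [hsq]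
    _ = (χ dz * Y dz) ^ 2 := by ring
  rw [e1, e2, e3]
  exact key

lemma one_le_numPkFree (hr : 0 < r) (hs : 2 ≤ s) (H : SimpleGraph (Fin n)) :
    1 ≤ numPkFree H r k s := by
  rw [numPkFree]
  have hne : Nonempty {c : H.edgeSet → Fin r // PkFree H r k s c} := by
    refine ⟨⟨fun _ => ⟨0, hr⟩, ?_⟩⟩
    intro t ht
    have hsub : {col : Fin r | ∃ e : H.edgeSet,
        (∀ w ∈ (e : Sym2 (Fin n)), w ∈ t) ∧ (fun _ => (⟨0, hr⟩ : Fin r)) e = col}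
        ⊆ {(⟨0, hr⟩ : Fin r)} := by
      rintro col ⟨e, hin, rfl⟩
      simp
    have := Set.ncard_le_ncard hsub (Set.finite_singleton _)
    rw [Set.ncard_singleton] at this
    omega
  exact Nat.card_pos

lemma numPkFree_le_bound (hr : 0 < r) (H : SimpleGraph (Fin n)) :
    numPkFree H r k s ≤ Nat.card (Sym2 (Fin n) → Fin r) := by
  rw [numPkFree_eq_card_totFree H ⟨0, hr⟩]
  exact Nat.card_le_card_of_injective Subtype.val Subtype.val_injective

lemma le_maxPkFree (hr : 0 < r) (H : SimpleGraph (Fin n)) :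
    numPkFree H r k s ≤ maxPkFree n r k s := by
  apply le_csSup
  · refine ⟨Nat.card (Sym2 (Fin n) → Fin r), ?_⟩
    rintro N ⟨G', rfl⟩
    exact numPkFree_le_bound hr G'
  · exact ⟨H, rfl⟩

lemma ext_clone (hr : 0 < r) (hs : 2 ≤ s) {G : SimpleGraph (Fin n)} {u v : Fin n}
    (hne : u ≠ v) (huv : ¬G.Adj u v) (hG : numPkFree G r k s = maxPkFree n r k s) :
    numPkFree (G.replaceVertex u v) r k s = maxPkFree n r k s ∧
      numPkFree (G.replaceVertex v u) r k s = maxPkFree n r k s := by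
  have h1 := clone_sq_le (s := s) (k := k) G u v hne huv (⟨0, hr⟩ : Fin r)
  have ha := le_maxPkFree (s := s) (k := k) hr (G.replaceVertex u v)
  have hb := le_maxPkFree (s := s) (k := k) hr (G.replaceVertex v u)
  have hM : 1 ≤ maxPkFree n r k s := hG ▸ one_le_numPkFree hr hs G
  rw [hG] at h1
  set M := maxPkFree n r k s
  set a := numPkFree (G.replaceVertex u v) r k s
  set b := numPkFree (G.replaceVertex v u) r k s
  rw [pow_two] at h1
  constructor
  · refine le_antisymm ha ?_
    have h2 : M * M ≤ a * M := le_trans h1 (Nat.mul_le_mul_left a hb)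
    exact Nat.le_of_mul_le_mul_right h2 hM
  · refine le_antisymm hb ?_
    have h2 : M * M ≤ M * b := le_trans h1 (Nat.mul_le_mul_right b ha)
    exact Nat.le_of_mul_le_mul_left h2 hM

end Core
section Count

variable {n r k s : ℕ}

lemma ncard_edgeSet_eq (H : SimpleGraph (Fin n)) [DecidableRel H.Adj] :
    H.edgeSet.ncard = H.edgeFinset.card := by
  rw [← Nat.card_coe_set_eq, Nat.card_eq_fintype_card, ← Set.toFinset_card]
  exact congrArg Finset.card (by ext e; simp)

lemma ncard_neighborSet_eq (H : SimpleGraph (Fin n)) [DecidableRel H.Adj] (x : Fin n) :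
    (H.neighborSet x).ncard = H.degree x := by
  rw [← Nat.card_coe_set_eq, Nat.card_eq_fintype_card, ← Set.toFinset_card]
  rfl

lemma em_replace (G : SimpleGraph (Fin n)) {a b : Fin n} (hn : ¬G.Adj a b) :
    (G.replaceVertex a b).edgeSet.ncard + (G.neighborSet b).ncard
      = G.edgeSet.ncard + (G.neighborSet a).ncard := by
  classical
  letI : DecidableRel G.Adj := Classical.decRel _
  have hdb : G.degree b ≤ G.edgeFinset.card := by
    have inc : G.incidenceFinset b ⊆ G.edgeFinset := by
      simp [SimpleGraph.incidenceFinset, Set.toFinset_subset_toFinset,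
        SimpleGraph.incidenceSet_subset]
    rw [← SimpleGraph.card_incidenceFinset_eq_degree]
    exact Finset.card_le_card inc
  have hform := G.card_edgeFinset_replaceVertex_of_not_adj hn
  rw [ncard_edgeSet_eq, ncard_edgeSet_eq, ncard_neighborSet_eq, ncard_neighborSet_eq]
  omega

lemma neighborSet_replace_same (G : SimpleGraph (Fin n)) {a b : Fin n}
    (hab : a ≠ b) (hn : ¬G.Adj a b) :
    (G.replaceVertex a b).neighborSet a = G.neighborSet a := by
  ext y
  simp only [SimpleGraph.mem_neighborSet]
  by_cases hy : y = b
  · rw [hy]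
    constructor
    · intro h; exact absurd h (G.not_adj_replaceVertex_same a b)
    · intro h; exact absurd h hn
  · exact G.adj_replaceVertex_iff_of_ne a hab hy

lemma neighborSet_replace_other (G : SimpleGraph (Fin n)) {a b w : Fin n}
    (hwa : w ≠ a) (hwb : w ≠ b) (hnw : ¬G.Adj a w) :
    (G.replaceVertex a b).neighborSet w = G.neighborSet w \ {b} := by
  ext y
  simp only [SimpleGraph.mem_neighborSet, Set.mem_diff, Set.mem_singleton_iff]
  by_cases hy : y = b
  · rw [hy]
    constructor
    · intro h
      exact absurd ((G.adj_replaceVertex_iff_of_ne_right a hwb).mp h.symm) hnw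
    · rintro ⟨-, hfalse⟩; exact absurd rfl hfalse
  · rw [G.adj_replaceVertex_iff_of_ne a hwb hy]
    exact ⟨fun h => ⟨h, hy⟩, fun h => h.1⟩

lemma ncard_eq_of_iso {G1 G2 : SimpleGraph (Fin n)} (f : G1 ≃g G2) :
    G1.edgeSet.ncard = G2.edgeSet.ncard := by
  rw [← Nat.card_coe_set_eq, ← Nat.card_coe_set_eq]
  exact Nat.card_congr f.mapEdgeSet

lemma triple_of_not_cm {G : SimpleGraph (Fin n)} (h : ¬ IsCompleteMultipartite' G) :
    ∃ u v w, u ≠ v ∧ v ≠ w ∧ ¬G.Adj u v ∧ ¬G.Adj v w ∧ G.Adj u w := by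
  classical
  by_contra hc
  push_neg at hc
  apply h
  have htrans : ∀ x y zz : Fin n, ¬G.Adj x y → ¬G.Adj y zz → ¬G.Adj x zz := by
    intro x y zz h1 h2
    rcases eq_or_ne x y with rfl | hxy
    · exact h2
    rcases eq_or_ne y zz with rfl | hyz
    · exact h1
    exact hc x y zz hxy hyz h1 h2
  have hmemself : ∀ x : Fin n, x ∈ Finset.univ.filter (fun z => ¬G.Adj x z) :=
    fun x => Finset.mem_filter.mpr ⟨Finset.mem_univ x, G.loopless.irrefl x⟩
  have hmineq : ∀ s t : Finset (Fin n), (hs : s.Nonempty) → (ht : t.Nonempty) → s = t →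
      s.min' hs = t.min' ht := by rintro s t hs ht rfl; rfl
  refine ⟨fun x => (Finset.univ.filter (fun z => ¬ G.Adj x z)).min' ⟨x, hmemself x⟩,
    fun v w => ?_⟩
  have hfilter : ∀ x y : Fin n, ¬G.Adj x y →
      Finset.univ.filter (fun z => ¬G.Adj x z) = Finset.univ.filter (fun z => ¬G.Adj y z) := by
    intro x y hxy
    ext zz
    simp only [Finset.mem_filter, Finset.mem_univ, true_and]
    constructor
    · intro hxz; exact htrans y x zz (fun hh => hxy hh.symm) hxz
    · intro hyz; exact htrans x y zz hxy hyz
  constructor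
  · intro hadj hfeq
    have h1 := Finset.min'_mem (Finset.univ.filter (fun z => ¬G.Adj v z)) ⟨v, hmemself v⟩
    have h2 := Finset.min'_mem (Finset.univ.filter (fun z => ¬G.Adj w z)) ⟨w, hmemself w⟩
    have h3 : (Finset.univ.filter (fun z => ¬G.Adj v z)).min' ⟨v, hmemself v⟩
        = (Finset.univ.filter (fun z => ¬G.Adj w z)).min' ⟨w, hmemself w⟩ := hfeq
    rw [← h3] at h2
    have hv0 : ¬G.Adj v _ := (Finset.mem_filter.mp h1).2
    have hw0 : ¬G.Adj w _ := (Finset.mem_filter.mp h2).2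
    exact absurd hadj (htrans v _ w hv0 (fun hh => hw0 hh.symm))
  · intro hfne
    by_contra hnadj
    exact hfne (hmineq _ _ _ _ (hfilter v w hnadj))

lemma exists_bigger_smaller (hr : 0 < r) (hs : 2 ≤ s) {G : SimpleGraph (Fin n)}
    (hG : numPkFree G r k s = maxPkFree n r k s) (hncm : ¬IsCompleteMultipartite' G) :
    (∃ H : SimpleGraph (Fin n), numPkFree H r k s = maxPkFree n r k s ∧
        H.edgeSet.ncard < G.edgeSet.ncard) ∧
    (∃ H : SimpleGraph (Fin n), numPkFree H r k s = maxPkFree n r k s ∧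
        G.edgeSet.ncard < H.edgeSet.ncard) := by
  obtain ⟨u, v, w, huv_ne, hvw_ne, huv, hvw, huw⟩ := triple_of_not_cm hncm
  have h_uv := em_replace G huv
  have h_vu := em_replace G (fun h => huv h.symm)
  have h_vw := em_replace G hvw
  have h_wv := em_replace G (fun h => hvw h.symm)
  rcases lt_trichotomy ((G.neighborSet u).ncard) ((G.neighborSet v).ncard) with hlt | heq | hgt
  · obtain ⟨hA, hB⟩ := ext_clone hr hs huv_ne huv hG
    exact ⟨⟨_, hA, by omega⟩, ⟨_, hB, by omega⟩⟩
  · rcases lt_trichotomy ((G.neighborSet v).ncard) ((G.neighborSet w).ncard) with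
      hlt2 | heq2 | hgt2
    · obtain ⟨hA, hB⟩ := ext_clone hr hs hvw_ne hvw hG
      exact ⟨⟨_, hA, by omega⟩, ⟨_, hB, by omega⟩⟩
    · -- all three degrees equal
      obtain ⟨-, hAext⟩ := ext_clone hr hs huv_ne huv hG
      have hvu_ne : v ≠ u := huv_ne.symm
      have hwv_ne : w ≠ v := hvw_ne.symm
      have huw_ne : u ≠ w := huw.ne
      have hwu_ne : w ≠ u := huw_ne.symm
      have hvu : ¬G.Adj v u := fun hh => huv hh.symm
      have hAvw : ¬(G.replaceVertex v u).Adj v w := by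
        rw [G.adj_replaceVertex_iff_of_ne v hvu_ne hwu_ne]
        exact hvw
      have hANv : (G.replaceVertex v u).neighborSet v = G.neighborSet v :=
        neighborSet_replace_same G hvu_ne hvu
      have hANw : (G.replaceVertex v u).neighborSet w = G.neighborSet w \ {u} :=
        neighborSet_replace_other G hwv_ne hwu_ne hvw
      have hu_in : u ∈ G.neighborSet w := by
        simpa [SimpleGraph.mem_neighborSet] using huw.symm
      have hnsne : (G.neighborSet w).Nonempty := ⟨u, hu_in⟩
      have hdw_pos : 1 ≤ (G.neighborSet w).ncard := by
        have h0 := (Set.ncard_pos (Set.toFinite _)).mpr hnsne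
        omega
      obtain ⟨hB1, hB2⟩ := ext_clone hr hs hvw_ne hAvw hAext
      have e1 := em_replace (G.replaceVertex v u) hAvw
      have e2 := em_replace (G.replaceVertex v u) (fun h => hAvw h.symm)
      rw [hANv, hANw, Set.ncard_diff_singleton_of_mem hu_in] at e1 e2
      exact ⟨⟨_, hB2, by omega⟩, ⟨_, hB1, by omega⟩⟩
    · obtain ⟨hA, hB⟩ := ext_clone hr hs hvw_ne hvw hG
      exact ⟨⟨_, hB, by omega⟩, ⟨_, hA, by omega⟩⟩
  · obtain ⟨hA, hB⟩ := ext_clone hr hs huv_ne huv hG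
    exact ⟨⟨_, hB, by omega⟩, ⟨_, hA, by omega⟩⟩

end Count

/-- **Theorem 4.1.** If some `(r,P_{k,s})`-extremal `n`-vertex graph is not complete
multipartite, then there are two non-isomorphic `(r,P_{k,s})`-extremal complete multipartite
graphs on `n` vertices. -/
theorem thm_two_extremal (n r k s : ℕ) (hn : 2 ≤ n) (hr : 2 ≤ r) (hk : 2 ≤ k)
    (hs2 : 2 ≤ s) (hsk : s ≤ k.choose 2) (G : SimpleGraph (Fin n))
    (hext : numPkFree G r k s = maxPkFree n r k s) (hncm : ¬ IsCompleteMultipartite' G) :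
    ∃ G1 G2 : SimpleGraph (Fin n),
      IsCompleteMultipartite' G1 ∧ IsCompleteMultipartite' G2 ∧
      numPkFree G1 r k s = maxPkFree n r k s ∧ numPkFree G2 r k s = maxPkFree n r k s ∧
      ¬ Nonempty (G1 ≃g G2) := by
  classical
  have hr0 : 0 < r := by omega
  set S : Set ℕ := {m | ∃ H : SimpleGraph (Fin n),
    numPkFree H r k s = maxPkFree n r k s ∧ H.edgeSet.ncard = m} with hS
  have hSne : S.Nonempty := ⟨G.edgeSet.ncard, G, hext, rfl⟩
  have hSbdd : BddAbove S := by
    refine ⟨(Set.univ : Set (Sym2 (Fin n))).ncard, ?_⟩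
    rintro m ⟨H, -, rfl⟩
    exact Set.ncard_le_ncard (Set.subset_univ _) Set.finite_univ
  obtain ⟨Hmax, hHmaxE, hHmaxm⟩ := Nat.sSup_mem hSne hSbdd
  obtain ⟨Hmin, hHminE, hHminm⟩ := Nat.sInf_mem hSne
  have hmaxCM : IsCompleteMultipartite' Hmax := by
    by_contra hcm
    obtain ⟨-, H', hH'E, hlt⟩ := exists_bigger_smaller hr0 hs2 hHmaxE hcm
    have hle : H'.edgeSet.ncard ≤ sSup S := le_csSup hSbdd ⟨H', hH'E, rfl⟩
    omega
  have hminCM : IsCompleteMultipartite' Hmin := by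
    by_contra hcm
    obtain ⟨⟨H', hH'E, hlt⟩, -⟩ := exists_bigger_smaller hr0 hs2 hHminE hcm
    have hle : sInf S ≤ H'.edgeSet.ncard := Nat.sInf_le ⟨H', hH'E, rfl⟩
    omega
  obtain ⟨⟨Ha, hHaE, hHa⟩, ⟨Hb, hHbE, hHb⟩⟩ := exists_bigger_smaller hr0 hs2 hext hncm
  have h1 : sInf S ≤ Ha.edgeSet.ncard := Nat.sInf_le ⟨Ha, hHaE, rfl⟩
  have h2 : Hb.edgeSet.ncard ≤ sSup S := le_csSup hSbdd ⟨Hb, hHbE, rfl⟩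
  refine ⟨Hmax, Hmin, hmaxCM, hminCM, hHmaxE, hHminE, ?_⟩
  rintro ⟨f⟩
  have := ncard_eq_of_iso f
  omega


end ERExt
end
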